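/- arXiv:2506.06529 — 4 statements merged into one kernel-verified Lean document; each statement's English description precedes it below -/
import Mathlib

section
/- Let Ω be a locally compact Hausdorff space, α a homeomorphism, w continuous positive bounded with bounded inverse, K ⊆ Ω compact, and μ a finite signed Borel measure with |μ|(Kᶜ) = 0. Let A ⊆ K be Borel and let μ̃(B) = μ(B ∩ Aᶜ ∩ K). Then ‖T*(μ̃)‖ ≤ (sup_{t ∈ Aᶜ ∩ K} w(t)) · ‖μ‖, where T* is the adjoint of T_{α,w} acting on M(Ω). -/
open MeasureTheory

/-- Integral of a real function over a set against a finite signed measure, via the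
Jordan decomposition. -/
noncomputable def signedSetIntegral {Ω : Type} [MeasurableSpace Ω]
    (μ : SignedMeasure Ω) (E : Set Ω) (f : Ω → ℝ) : ℝ :=
  (∫ x in E, f x ∂μ.toJordanDecomposition.posPart) -
    ∫ x in E, f x ∂μ.toJordanDecomposition.negPart

lemma jordan_unique {Ω : Type} [MeasurableSpace Ω] (s : SignedMeasure Ω)
    (p n : Measure Ω) [IsFiniteMeasure p] [IsFiniteMeasure n] (h : p ⟂ₘ n)
    (hs : ∀ E, MeasurableSet E → s E = (p E).toReal - (n E).toReal) :
    s.toJordanDecomposition = ⟨p, n, h⟩ := by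
  have hse : s = (⟨p, n, h⟩ : JordanDecomposition Ω).toSignedMeasure := by
    refine VectorMeasure.ext fun E hE => ?_
    rw [hs E hE, JordanDecomposition.toSignedMeasure, VectorMeasure.sub_apply,
      Measure.toSignedMeasure_apply_measurable hE, Measure.toSignedMeasure_apply_measurable hE]
    rfl
  rw [hse, JordanDecomposition.toJordanDecomposition_toSignedMeasure]

lemma signed_apply_jordan {Ω : Type} [MeasurableSpace Ω] (s : SignedMeasure Ω)
    {E : Set Ω} (hE : MeasurableSet E) :
    s E = (s.toJordanDecomposition.posPart E).toReal -
      (s.toJordanDecomposition.negPart E).toReal := by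
  conv_lhs => rw [← s.toSignedMeasure_toJordanDecomposition]
  rw [JordanDecomposition.toSignedMeasure, VectorMeasure.sub_apply,
    Measure.toSignedMeasure_apply_measurable hE, Measure.toSignedMeasure_apply_measurable hE]
  rfl

lemma setIntegral_bound {Ω : Type} [TopologicalSpace Ω] [MeasurableSpace Ω] [BorelSpace Ω]
    (α : Homeomorph Ω Ω) (w : Ω → ℝ) (hw : Continuous w) (hwpos : ∀ x, 0 < w x)
    (m : Measure Ω) [IsFiniteMeasure m] (S : Set Ω) (hSm : MeasurableSet S)
    {C : ℝ} (hC0 : 0 ≤ C) (hCw : ∀ x ∈ S, w x ≤ C)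
    (T : Set Ω) (hT : MeasurableSet T) :
    0 ≤ (∫ x in T, w (α.symm x) ∂((m.restrict S).map ⇑α)) ∧
      (∫ x in T, w (α.symm x) ∂((m.restrict S).map ⇑α)) ≤ C * (m Set.univ).toReal := by
  have hαm : Measurable (⇑α) := α.continuous.measurable
  have hf : Continuous fun x => w (α.symm x) := hw.comp α.symm.continuous
  have hmap : (∫ x in T, w (α.symm x) ∂((m.restrict S).map ⇑α))
      = ∫ x in ⇑α ⁻¹' T ∩ S, w x ∂m := by
    rw [setIntegral_map hT hf.aestronglyMeasurable hαm.aemeasurable]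
    simp only [Homeomorph.symm_apply_apply]
    rw [Measure.restrict_restrict (hT.preimage hαm)]
  rw [hmap]
  constructor
  · exact setIntegral_nonneg ((hT.preimage hαm).inter hSm) fun x _ => (hwpos x).le
  · have hb : ‖∫ x in ⇑α ⁻¹' T ∩ S, w x ∂m‖ ≤ C * (m (⇑α ⁻¹' T ∩ S)).toReal := by
      refine norm_setIntegral_le_of_norm_le_const (measure_lt_top m _) (fun x hx => ?_)
      rw [Real.norm_of_nonneg (hwpos x).le]; exact hCw x hx.2
    refine le_trans (le_trans (le_abs_self _) hb) ?_
    exact mul_le_mul_of_nonneg_left (ENNReal.toReal_mono (measure_ne_top m _)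
      (measure_mono (Set.subset_univ _))) hC0

theorem stmt7 {Ω : Type} [TopologicalSpace Ω] [LocallyCompactSpace Ω] [T2Space Ω]
    [MeasurableSpace Ω] [BorelSpace Ω]
    (α : Homeomorph Ω Ω) (w : Ω → ℝ) (hw : Continuous w) (hwpos : ∀ x, 0 < w x)
    (hwbdd : BddAbove (Set.range w)) (hwinvbdd : BddAbove (Set.range fun x => (w x)⁻¹))
    (Tstar : SignedMeasure Ω → SignedMeasure Ω)
    (hTstar : ∀ (μ : SignedMeasure Ω) (E : Set Ω), MeasurableSet E →
      Tstar μ E = signedSetIntegral (μ.map ⇑α) E (fun x => w (α.symm x)))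
    (K : Set Ω) (hK : IsCompact K) (hKm : MeasurableSet K)
    (μ : SignedMeasure Ω) (hμK : μ.totalVariation Kᶜ = 0)
    (A : Set Ω) (hAm : MeasurableSet A) (hAK : A ⊆ K)
    (μt : SignedMeasure Ω) (hμt : ∀ B : Set Ω, MeasurableSet B → μt B = μ (B ∩ Aᶜ ∩ K)) :
    ((Tstar μt).totalVariation Set.univ).toReal ≤
      sSup (w '' (Aᶜ ∩ K)) * (μ.totalVariation Set.univ).toReal := by
  classical
  have hαm : Measurable (⇑α) := α.continuous.measurable
  set S := Aᶜ ∩ K with hSdef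
  have hSm : MeasurableSet S := hAm.compl.inter hKm
  set C := sSup (w '' S) with hCdef
  have hwS : BddAbove (w '' S) := BddAbove.mono (Set.image_subset_range w S) hwbdd
  have hC0 : 0 ≤ C := Real.sSup_nonneg (by rintro x ⟨y, -, rfl⟩; exact (hwpos y).le)
  have hCw : ∀ x ∈ S, w x ≤ C := fun x hx => le_csSup hwS ⟨x, hx, rfl⟩
  set μp := μ.toJordanDecomposition.posPart with hμp
  set μn := μ.toJordanDecomposition.negPart with hμn
  have hsing1 : μp.restrict S ⟂ₘ μn.restrict S :=
    μ.toJordanDecomposition.mutuallySingular.mono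
      Measure.restrict_le_self Measure.restrict_le_self
  have h1 : μt.toJordanDecomposition = ⟨μp.restrict S, μn.restrict S, hsing1⟩ := by
    refine jordan_unique _ _ _ _ fun E hE => ?_
    rw [hμt E hE, Set.inter_assoc, ← hSdef,
      Measure.restrict_apply hE, Measure.restrict_apply hE]
    exact signed_apply_jordan μ (hE.inter hSm)
  have hsing2 : (μp.restrict S).map ⇑α ⟂ₘ (μn.restrict S).map ⇑α := by
    obtain ⟨u, hu, hu1, hu2⟩ := hsing1
    refine ⟨⇑α.symm ⁻¹' u, hu.preimage α.symm.continuous.measurable, ?_, ?_⟩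
    · rw [Measure.map_apply hαm (hu.preimage α.symm.continuous.measurable)]
      simpa [Set.preimage_preimage] using hu1
    · rw [← Set.preimage_compl,
        Measure.map_apply hαm (hu.compl.preimage α.symm.continuous.measurable)]
      simpa [Set.preimage_preimage] using hu2
  have h2 : SignedMeasure.toJordanDecomposition (μt.map ⇑α)
      = (⟨(μp.restrict S).map ⇑α, (μn.restrict S).map ⇑α, hsing2⟩ : JordanDecomposition Ω) := by
    refine jordan_unique _ _ _ _ fun E hE => ?_
    rw [VectorMeasure.map_apply μt hαm hE, Measure.map_apply hαm hE, Measure.map_apply hαm hE,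
      signed_apply_jordan μt (hE.preimage hαm), h1]
  have hσ : ∀ T : Set Ω, MeasurableSet T →
      Tstar μt T = (∫ x in T, w (α.symm x) ∂((μp.restrict S).map ⇑α))
        - ∫ x in T, w (α.symm x) ∂((μn.restrict S).map ⇑α) := by
    intro T hT
    rw [hTstar μt T hT, signedSetIntegral, h2]
  obtain ⟨P, hP, hP2, hP3, hpos, hneg⟩ := (Tstar μt).toJordanDecomposition_spec
  have hTV : ((Tstar μt).totalVariation Set.univ).toReal
      = Tstar μt P + -(Tstar μt Pᶜ) := by
    rw [SignedMeasure.totalVariation, Measure.add_apply, hpos, hneg,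
      SignedMeasure.toMeasureOfZeroLE_apply _ hP2 hP MeasurableSet.univ,
      SignedMeasure.toMeasureOfLEZero_apply _ hP3 hP.compl MeasurableSet.univ]
    rw [← ENNReal.coe_add, ENNReal.coe_toReal, NNReal.coe_add]
    simp [Set.inter_univ]
  have hobP := setIntegral_bound α w hw hwpos μp S hSm hC0 hCw P hP
  have hobP' := setIntegral_bound α w hw hwpos μn S hSm hC0 hCw P hP
  have hobQ := setIntegral_bound α w hw hwpos μp S hSm hC0 hCw Pᶜ hP.compl
  have hobQ' := setIntegral_bound α w hw hwpos μn S hSm hC0 hCw Pᶜ hP.compl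
  have hTVμ : (μ.totalVariation Set.univ).toReal
      = (μp Set.univ).toReal + (μn Set.univ).toReal := by
    rw [SignedMeasure.totalVariation, Measure.add_apply,
      ENNReal.toReal_add (measure_ne_top _ _) (measure_ne_top _ _)]
  have e1 : Tstar μt P ≤ C * (μp Set.univ).toReal := by
    rw [hσ P hP]; linarith [hobP.2, hobP'.1]
  have e2 : -(Tstar μt Pᶜ) ≤ C * (μn Set.univ).toReal := by
    rw [hσ Pᶜ hP.compl]; linarith [hobQ'.2, hobQ.1]
  rw [hTV, hTVμ, mul_add]
  linarith
end

section
/- Let Ω be a locally compact Hausdorff space, α a homeomorphism, w continuous positive bounded with bounded inverse, K ⊆ Ω compact, and ν a finite signed Borel measure with |ν|(Kᶜ) = 0. Let D ⊆ K be Borel and let ν̃(B) = ν(B ∩ D). Then ‖(T*)²(ν̃)‖ ≤ (sup_{t ∈ D} w(t)·(w ∘ α)(t)) · ‖ν‖. -/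
open MeasureTheory
open scoped ENNReal NNReal

namespace StmtAux

variable {Ω : Type} [MeasurableSpace Ω]

lemma apply_eq_toReal_sub (s : SignedMeasure Ω) {A : Set Ω} (hA : MeasurableSet A) :
    s A = (s.toJordanDecomposition.posPart A).toReal -
      (s.toJordanDecomposition.negPart A).toReal := by
  conv_lhs => rw [← s.toSignedMeasure_toJordanDecomposition]
  rw [JordanDecomposition.toSignedMeasure, Measure.toSignedMeasure_sub_apply hA]
  rfl

lemma ofReal_apply_le (s : SignedMeasure Ω) {A : Set Ω} (hA : MeasurableSet A) :
    ENNReal.ofReal (s A) ≤ s.toJordanDecomposition.posPart A := by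
  rw [apply_eq_toReal_sub s hA]
  refine le_trans (ENNReal.ofReal_le_ofReal ?_) ENNReal.ofReal_toReal_le
  simp [ENNReal.toReal_nonneg]

lemma ofReal_neg_apply_le (s : SignedMeasure Ω) {A : Set Ω} (hA : MeasurableSet A) :
    ENNReal.ofReal (-(s A)) ≤ s.toJordanDecomposition.negPart A := by
  rw [apply_eq_toReal_sub s hA, neg_sub]
  refine le_trans (ENNReal.ofReal_le_ofReal ?_) ENNReal.ofReal_toReal_le
  simp [ENNReal.toReal_nonneg]

/-- Key general estimate: if both `ofReal (s A)` and `ofReal (-(s A))` are bounded by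
`m A` on all measurable sets, then the total variation of `s` is bounded by `m`. -/
lemma totalVariation_le (s : SignedMeasure Ω) (m : Measure Ω)
    (h : ∀ A : Set Ω, MeasurableSet A → ENNReal.ofReal (s A) ≤ m A)
    (h' : ∀ A : Set Ω, MeasurableSet A → ENNReal.ofReal (-(s A)) ≤ m A) :
    s.totalVariation ≤ m := by
  rw [Measure.le_iff]
  intro E hE
  obtain ⟨i, hi₁, hi₂, hi₃, hpos, hneg⟩ := s.toJordanDecomposition_spec
  rw [SignedMeasure.totalVariation, Measure.add_apply, hpos, hneg,
    SignedMeasure.toMeasureOfZeroLE_apply _ _ _ hE,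
    SignedMeasure.toMeasureOfLEZero_apply _ _ _ hE,
    ← ENNReal.ofReal_eq_coe_nnreal, ← ENNReal.ofReal_eq_coe_nnreal]
  have h1 : ENNReal.ofReal (s (i ∩ E)) ≤ m (E ∩ i) := by
    rw [Set.inter_comm]; exact h _ (hE.inter hi₁)
  have h2 : ENNReal.ofReal (-s (iᶜ ∩ E)) ≤ m (E \ i) := by
    rw [Set.inter_comm, Set.diff_eq]
    exact h' _ (hE.inter hi₁.compl)
  calc ENNReal.ofReal (s (i ∩ E)) + ENNReal.ofReal (-s (iᶜ ∩ E))
      ≤ m (E ∩ i) + m (E \ i) := add_le_add h1 h2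
    _ = m E := measure_inter_add_diff E hi₁

end StmtAux

open StmtAux in
theorem stmt8 {Ω : Type} [TopologicalSpace Ω] [LocallyCompactSpace Ω] [T2Space Ω]
    [MeasurableSpace Ω] [BorelSpace Ω]
    (α : Homeomorph Ω Ω) (w : Ω → ℝ) (hw : Continuous w) (hwpos : ∀ x, 0 < w x)
    (hwbdd : BddAbove (Set.range w)) (hwinvbdd : BddAbove (Set.range fun x => (w x)⁻¹))
    (Tstar : SignedMeasure Ω → SignedMeasure Ω)
    (hTstar : ∀ (μ : SignedMeasure Ω) (E : Set Ω), MeasurableSet E →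
      Tstar μ E = signedSetIntegral (μ.map ⇑α) E (fun x => w (α.symm x)))
    (K : Set Ω) (hK : IsCompact K) (hKm : MeasurableSet K)
    (ν : SignedMeasure Ω) (hνK : ν.totalVariation Kᶜ = 0)
    (D : Set Ω) (hDm : MeasurableSet D) (hDK : D ⊆ K)
    (νt : SignedMeasure Ω) (hνt : ∀ B : Set Ω, MeasurableSet B → νt B = ν (B ∩ D)) :
    ((Tstar^[2] νt).totalVariation Set.univ).toReal ≤
      sSup ((fun t => w t * w (α t)) '' D) * (ν.totalVariation Set.univ).toReal := by
  classical
  have hα : Measurable ⇑α := α.continuous.measurable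
  have hαsymm : Measurable ⇑α.symm := α.symm.continuous.measurable
  set c : ℝ := sSup (Set.range w) with hc
  have hwle : ∀ x, w x ≤ c := fun x => le_csSup hwbdd (Set.mem_range_self x)
  set f : Ω → ℝ := fun x => w (α.symm x) with hf
  have hfc : Continuous f := hw.comp α.symm.continuous
  have hf0 : ∀ x, 0 ≤ f x := fun x => (hwpos _).le
  set f' : Ω → ℝ≥0∞ := fun x => ENNReal.ofReal (f x) with hf'
  have hf'm : Measurable f' := hfc.measurable.ennreal_ofReal
  -- integrability of f against any finite measure
  have hint : ∀ (P : Measure Ω) [IsFiniteMeasure P], Integrable f P := by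
    intro P _
    refine ⟨hfc.aestronglyMeasurable, HasFiniteIntegral.of_bounded (C := c) ?_⟩
    exact Filter.Eventually.of_forall fun x => by
      rw [Real.norm_eq_abs, abs_of_pos (hwpos _)]; exact hwle _
  -- the key estimate for Tstar
  have key : ∀ μ : SignedMeasure Ω,
      (Tstar μ).totalVariation ≤ (SignedMeasure.totalVariation (μ.map ⇑α)).withDensity f' := by
    intro μ
    set P := (SignedMeasure.toJordanDecomposition (μ.map ⇑α)).posPart with hP
    set N := (SignedMeasure.toJordanDecomposition (μ.map ⇑α)).negPart with hN
    have htv : SignedMeasure.totalVariation (μ.map ⇑α) = P + N := rfl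
    have hPle : P ≤ SignedMeasure.totalVariation (μ.map ⇑α) := by
      rw [htv]; exact Measure.le_add_right le_rfl
    have hNle : N ≤ SignedMeasure.totalVariation (μ.map ⇑α) := by
      rw [htv]; exact Measure.le_add_left le_rfl
    have hbd : ∀ (Q : Measure Ω), Q ≤ SignedMeasure.totalVariation (μ.map ⇑α) → [IsFiniteMeasure Q] →
        ∀ A : Set Ω, MeasurableSet A →
        ENNReal.ofReal (∫ x in A, f x ∂Q) ≤ (SignedMeasure.totalVariation (μ.map ⇑α)).withDensity f' A := by
      intro Q hQ _ A hA
      rw [withDensity_apply _ hA,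
        ofReal_integral_eq_lintegral_ofReal ((hint Q).restrict)
          (Filter.Eventually.of_forall hf0)]
      exact lintegral_mono' (Measure.restrict_mono le_rfl hQ) le_rfl
    refine totalVariation_le _ _ (fun A hA => ?_) (fun A hA => ?_)
    · rw [hTstar μ A hA, signedSetIntegral]
      refine le_trans (ENNReal.ofReal_le_ofReal (sub_le_self _
        (integral_nonneg hf0))) ?_
      exact hbd P hPle A hA
    · rw [hTstar μ A hA, signedSetIntegral, neg_sub]
      refine le_trans (ENNReal.ofReal_le_ofReal (sub_le_self _
        (integral_nonneg hf0))) ?_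
      exact hbd N hNle A hA
  -- total variation commutes with mapping by the homeomorphism α
  have tv_map : ∀ μ : SignedMeasure Ω,
      SignedMeasure.totalVariation (μ.map ⇑α) = μ.totalVariation.map ⇑α := by
    intro μ
    obtain ⟨u, hu, h1, h2⟩ := μ.toJordanDecomposition.mutuallySingular
    have hsing : (μ.toJordanDecomposition.posPart.map ⇑α) ⟂ₘ
        (μ.toJordanDecomposition.negPart.map ⇑α) := by
      refine ⟨⇑α.symm ⁻¹' u, hu.preimage hαsymm, ?_, ?_⟩
      · rw [Measure.map_apply hα (hu.preimage hαsymm)]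
        have : ⇑α ⁻¹' (⇑α.symm ⁻¹' u) = u := by
          ext x; simp
        rw [this]; exact h1
      · rw [← Set.preimage_compl, Measure.map_apply hα (hu.compl.preimage hαsymm)]
        have : ⇑α ⁻¹' (⇑α.symm ⁻¹' uᶜ) = uᶜ := by
          ext x; simp
        rw [this]; exact h2
    set J : JordanDecomposition Ω :=
      ⟨μ.toJordanDecomposition.posPart.map ⇑α,
       μ.toJordanDecomposition.negPart.map ⇑α, hsing⟩ with hJ
    have heq : μ.map ⇑α = J.toSignedMeasure := by
      ext E hE
      rw [VectorMeasure.map_apply _ hα hE, JordanDecomposition.toSignedMeasure,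
        Measure.toSignedMeasure_sub_apply hE,
        apply_eq_toReal_sub μ (hE.preimage hα)]
      simp only [hJ, Measure.real, Measure.map_apply hα hE]
    have : SignedMeasure.toJordanDecomposition (μ.map ⇑α) = J := by
      rw [heq, JordanDecomposition.toJordanDecomposition_toSignedMeasure]
    rw [SignedMeasure.totalVariation, this, hJ]
    exact (Measure.map_add _ _ hα).symm
  -- total variation of νt is bounded by ν's restricted to D
  have hνtle : νt.totalVariation ≤ ν.totalVariation.restrict D := by
    refine totalVariation_le _ _ (fun A hA => ?_) (fun A hA => ?_)
    · rw [hνt A hA, Measure.restrict_apply hA]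
      exact le_trans (ofReal_apply_le ν (hA.inter hDm))
        (Measure.le_add_right le_rfl _)
    · rw [hνt A hA, Measure.restrict_apply hA]
      exact le_trans (ofReal_neg_apply_le ν (hA.inter hDm))
        (Measure.le_add_left le_rfl _)
  -- bounds for the sup
  by_cases hDne : D.Nonempty
  · obtain ⟨t₀, ht₀⟩ := hDne
    set S : ℝ := sSup ((fun t => w t * w (α t)) '' D) with hS
    have himbdd : BddAbove ((fun t => w t * w (α t)) '' D) := by
      refine ⟨c * c, fun y hy => ?_⟩
      obtain ⟨t, _, rfl⟩ := hy
      exact mul_le_mul (hwle t) (hwle (α t)) (hwpos _).le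
        (le_trans (hwpos t₀).le (hwle t₀))
    have hSmem : ∀ t ∈ D, w t * w (α t) ≤ S := fun t ht =>
      le_csSup himbdd (Set.mem_image_of_mem _ ht)
    have hS0 : 0 ≤ S :=
      le_trans (mul_nonneg (hwpos t₀).le (hwpos _).le) (hSmem t₀ ht₀)
    -- main chain of inequalities in ℝ≥0∞
    have main : (Tstar^[2] νt).totalVariation Set.univ ≤
        ENNReal.ofReal S * ν.totalVariation Set.univ := by
      have h2 : Tstar^[2] νt = Tstar (Tstar νt) := rfl
      set σ₁ := Tstar νt with hσ₁
      set m₀ : Measure Ω := ν.totalVariation.restrict D with hm₀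
      -- step 1
      have step1 : (Tstar (Tstar νt)).totalVariation Set.univ ≤
          ∫⁻ x, ENNReal.ofReal (w x) ∂σ₁.totalVariation := by
        refine le_trans (key σ₁ Set.univ) ?_
        rw [withDensity_apply _ MeasurableSet.univ, Measure.restrict_univ,
          tv_map σ₁, lintegral_map hf'm hα]
        refine le_of_eq (lintegral_congr fun x => ?_)
        simp [hf', hf]
      -- step 2 : σ₁.totalVariation ≤ (m₀.map α).withDensity f'
      have step2 : σ₁.totalVariation ≤ (m₀.map ⇑α).withDensity f' := by
        refine le_trans (key νt) ?_
        rw [tv_map νt]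
        rw [Measure.le_iff]
        intro E hE
        rw [withDensity_apply _ hE, withDensity_apply _ hE]
        exact lintegral_mono' (Measure.restrict_mono le_rfl
          (Measure.map_mono hνtle hα)) le_rfl
      have step3 : ∫⁻ x, ENNReal.ofReal (w x) ∂σ₁.totalVariation ≤
          ∫⁻ x in D, ENNReal.ofReal (w x * w (α x)) ∂ν.totalVariation := by
        refine le_trans (lintegral_mono' step2 le_rfl) ?_
        rw [lintegral_withDensity_eq_lintegral_mul _ hf'm hw.measurable.ennreal_ofReal]
        simp only [Pi.mul_apply]
        rw [lintegral_map (f := fun a => f' a * ENNReal.ofReal (w a)) (hf'm.mul hw.measurable.ennreal_ofReal) hα]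
        rw [hm₀, ← Measure.restrict_restrict_of_subset (subset_refl D)]
        · refine le_of_eq (lintegral_congr fun x => ?_)
          simp only [Pi.mul_apply, hf', hf, Homeomorph.symm_apply_apply]
          rw [← ENNReal.ofReal_mul (hwpos x).le]
      have step4 : ∫⁻ x in D, ENNReal.ofReal (w x * w (α x)) ∂ν.totalVariation ≤
          ENNReal.ofReal S * ν.totalVariation Set.univ := by
        calc ∫⁻ x in D, ENNReal.ofReal (w x * w (α x)) ∂ν.totalVariation
            ≤ ∫⁻ _ in D, ENNReal.ofReal S ∂ν.totalVariation := by
              refine setLIntegral_mono' hDm fun x hx => ?_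
              exact ENNReal.ofReal_le_ofReal (hSmem x hx)
          _ = ENNReal.ofReal S * ν.totalVariation D := by
              rw [setLIntegral_const]
          _ ≤ ENNReal.ofReal S * ν.totalVariation Set.univ := by
              exact mul_le_mul_right (measure_mono (Set.subset_univ D)) _
      rw [h2]
      exact le_trans step1 (le_trans step3 step4)
    -- convert to reals
    have hfin0 : ν.totalVariation Set.univ ≠ ⊤ := by
      have : ν.totalVariation Set.univ = ν.toJordanDecomposition.posPart Set.univ
          + ν.toJordanDecomposition.negPart Set.univ := rfl
      rw [this]
      exact ENNReal.add_ne_top.2 ⟨measure_ne_top _ _, measure_ne_top _ _⟩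
    have hfin : ENNReal.ofReal S * ν.totalVariation Set.univ ≠ ⊤ :=
      ENNReal.mul_ne_top ENNReal.ofReal_ne_top hfin0
    calc ((Tstar^[2] νt).totalVariation Set.univ).toReal
        ≤ (ENNReal.ofReal S * ν.totalVariation Set.univ).toReal :=
          ENNReal.toReal_mono hfin main
      _ = S * (ν.totalVariation Set.univ).toReal := by
          rw [ENNReal.toReal_mul, ENNReal.toReal_ofReal hS0]
  · -- D empty
    rw [Set.not_nonempty_iff_eq_empty] at hDne
    subst hDne
    have hνt0 : νt = 0 := by
      ext B hB
      rw [hνt B hB]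
      simp
    have hT0 : Tstar 0 = 0 := by
      ext E hE
      rw [hTstar 0 E hE, signedSetIntegral]
      have : (0 : SignedMeasure Ω).map ⇑α = 0 := by
        ext A hA
        rw [VectorMeasure.map_apply _ hα hA]
        simp
      rw [this, SignedMeasure.toJordanDecomposition_zero]
      simp
    have : Tstar^[2] νt = 0 := by
      rw [hνt0]
      show Tstar (Tstar 0) = 0
      rw [hT0, hT0]
    rw [this, SignedMeasure.totalVariation_zero]
    simp [Real.sSup_empty]
end

section
/- Let Ω be a locally compact Hausdorff space, α a homeomorphism, w continuous positive bounded with bounded inverse, K ⊆ Ω compact, and μ a finite signed Borel measure with |μ|(Kᶜ) = 0. Let A ⊆ K be Borel and μ̃(B) = μ(B ∩ Aᶜ ∩ K). Then ‖S*(μ̃)‖ ≤ (sup_{t ∈ Aᶜ ∩ K} (w(α⁻¹(t)))⁻¹) · ‖μ‖, where S* is the adjoint of S_{α,w} = T_{α,w}⁻¹. -/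
open MeasureTheory
open scoped ENNReal

namespace Stmt9Aux

variable {Ω : Type} [MeasurableSpace Ω]

lemma mutuallySingular_map {β : Type} [MeasurableSpace β] {m₁ m₂ : Measure Ω}
    (h : m₁ ⟂ₘ m₂) (e : Ω ≃ᵐ β) : m₁.map e ⟂ₘ m₂.map e := by
  obtain ⟨u, hu, h1, h2⟩ := h
  refine ⟨e.symm ⁻¹' u, e.symm.measurable hu, ?_, ?_⟩
  · rw [Measure.map_apply e.measurable (e.symm.measurable hu)]
    have : e ⁻¹' (e.symm ⁻¹' u) = u := by
      ext x; simp
    rwa [this]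
  · rw [Measure.map_apply e.measurable (e.symm.measurable hu).compl]
    have : e ⁻¹' (e.symm ⁻¹' u)ᶜ = uᶜ := by
      ext x; simp
    rwa [this]

/-- Restriction of a Jordan decomposition. -/
noncomputable def jdRestrict (j : JordanDecomposition Ω) (S : Set Ω) :
    JordanDecomposition Ω :=
  ⟨j.posPart.restrict S, j.negPart.restrict S,
    j.mutuallySingular.mono Measure.restrict_le_self Measure.restrict_le_self⟩

/-- Pushforward of a Jordan decomposition by a measurable equivalence. -/
noncomputable def jdMap {β : Type} [MeasurableSpace β] (j : JordanDecomposition Ω)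
    (e : Ω ≃ᵐ β) : JordanDecomposition β := by
  haveI h1 : IsFiniteMeasure (j.posPart.map e) := Measure.isFiniteMeasure_map _ _
  haveI h2 : IsFiniteMeasure (j.negPart.map e) := Measure.isFiniteMeasure_map _ _
  exact ⟨j.posPart.map e, j.negPart.map e, mutuallySingular_map j.mutuallySingular e⟩

@[simp] lemma jdMap_posPart {β : Type} [MeasurableSpace β] (j : JordanDecomposition Ω)
    (e : Ω ≃ᵐ β) : (jdMap j e).posPart = j.posPart.map e := rfl

@[simp] lemma jdMap_negPart {β : Type} [MeasurableSpace β] (j : JordanDecomposition Ω)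
    (e : Ω ≃ᵐ β) : (jdMap j e).negPart = j.negPart.map e := rfl

end Stmt9Aux

open Stmt9Aux

theorem stmt9 {Ω : Type} [TopologicalSpace Ω] [LocallyCompactSpace Ω] [T2Space Ω]
    [MeasurableSpace Ω] [BorelSpace Ω]
    (α : Homeomorph Ω Ω) (w : Ω → ℝ) (hw : Continuous w) (hwpos : ∀ x, 0 < w x)
    (hwbdd : BddAbove (Set.range w)) (hwinvbdd : BddAbove (Set.range fun x => (w x)⁻¹))
    (Sstar : SignedMeasure Ω → SignedMeasure Ω)
    (hSstar : ∀ (μ : SignedMeasure Ω) (E : Set Ω), MeasurableSet E →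
      Sstar μ E = signedSetIntegral (μ.map ⇑α.symm) E (fun t => (w t)⁻¹))
    (K : Set Ω) (hK : IsCompact K) (hKm : MeasurableSet K)
    (μ : SignedMeasure Ω) (hμK : μ.totalVariation Kᶜ = 0)
    (A : Set Ω) (hAm : MeasurableSet A) (hAK : A ⊆ K)
    (μt : SignedMeasure Ω) (hμt : ∀ B : Set Ω, MeasurableSet B → μt B = μ (B ∩ Aᶜ ∩ K)) :
    ((Sstar μt).totalVariation Set.univ).toReal ≤
      sSup ((fun t => (w (α.symm t))⁻¹) '' (Aᶜ ∩ K)) * (μ.totalVariation Set.univ).toReal := by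
  classical
  set S : Set Ω := Aᶜ ∩ K with hSdef
  have hSm : MeasurableSet S := hAm.compl.inter hKm
  set e : Ω ≃ᵐ Ω := (α.symm : Homeomorph Ω Ω).toMeasurableEquiv with he
  have hee : ⇑e = ⇑α.symm := rfl
  have hem : Measurable (⇑α.symm) := hee ▸ e.measurable
  set P : Measure Ω := μ.toJordanDecomposition.posPart with hP
  set N : Measure Ω := μ.toJordanDecomposition.negPart with hN
  -- μ applied via its Jordan decomposition
  have hμapp : ∀ B : Set Ω, MeasurableSet B → μ B = (P B).toReal - (N B).toReal := by
    intro B hB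
    conv_lhs => rw [← μ.toSignedMeasure_toJordanDecomposition]
    rw [JordanDecomposition.toSignedMeasure, Measure.toSignedMeasure_sub_apply hB]
    rfl
  -- Step 1: Jordan decomposition of μt
  have hj1 : μt.toJordanDecomposition = jdRestrict μ.toJordanDecomposition S := by
    apply MeasureTheory.SignedMeasure.toJordanDecomposition_eq
    ext B hB
    rw [JordanDecomposition.toSignedMeasure, Measure.toSignedMeasure_sub_apply hB]
    show μt B = ((jdRestrict μ.toJordanDecomposition S).posPart B).toReal -
      ((jdRestrict μ.toJordanDecomposition S).negPart B).toReal
    rw [hμt B hB, Set.inter_assoc]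
    rw [hμapp _ (hB.inter hSm)]
    simp only [jdRestrict]
    rw [Measure.restrict_apply hB, Measure.restrict_apply hB]
  -- Step 2: Jordan decomposition of ν := μt.map α.symm
  set ν : SignedMeasure Ω := μt.map ⇑α.symm with hν
  have hj2 : ν.toJordanDecomposition = jdMap (jdRestrict μ.toJordanDecomposition S) e := by
    apply MeasureTheory.SignedMeasure.toJordanDecomposition_eq
    ext B hB
    rw [hν, VectorMeasure.map_apply _ hem hB]
    have hμtapp : μt (⇑α.symm ⁻¹' B) =
        ((P.restrict S) (⇑α.symm ⁻¹' B)).toReal - ((N.restrict S) (⇑α.symm ⁻¹' B)).toReal := by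
      conv_lhs => rw [← μt.toSignedMeasure_toJordanDecomposition]
      rw [hj1, JordanDecomposition.toSignedMeasure,
        Measure.toSignedMeasure_sub_apply (hem hB)]
      rfl
    rw [hμtapp, JordanDecomposition.toSignedMeasure, Measure.toSignedMeasure_sub_apply hB]
    simp only [jdMap_posPart, jdMap_negPart, jdRestrict, hee]
    rw [Measure.real_def, Measure.real_def, Measure.map_apply hem hB, Measure.map_apply hem hB]
  set p : Measure Ω := (P.restrict S).map e with hp
  set n : Measure Ω := (N.restrict S).map e with hnn
  haveI hpf : IsFiniteMeasure p := Measure.isFiniteMeasure_map _ _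
  haveI hnf : IsFiniteMeasure n := Measure.isFiniteMeasure_map _ _
  -- the density
  set g : Ω → ℝ≥0∞ := fun t => ENNReal.ofReal (w t)⁻¹ with hg
  have hwinv_meas : Measurable fun t => (w t)⁻¹ := (hw.measurable).inv
  have hgm : Measurable g := hwinv_meas.ennreal_ofReal
  -- a uniform bound for g
  obtain ⟨Cw, hCw⟩ := id hwinvbdd
  have hgbdd : ∀ x, g x ≤ ENNReal.ofReal Cw := fun x =>
    ENNReal.ofReal_le_ofReal (hCw ⟨x, rfl⟩)
  have hfin : ∀ (m : Measure Ω) [IsFiniteMeasure m], ∫⁻ x, g x ∂m ≠ ⊤ := by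
    intro m _
    refine ne_top_of_le_ne_top ?_ (MeasureTheory.lintegral_mono hgbdd)
    rw [MeasureTheory.lintegral_const]
    exact ENNReal.mul_ne_top ENNReal.ofReal_ne_top (measure_ne_top _ _)
  haveI hpgf : IsFiniteMeasure (p.withDensity g) := isFiniteMeasure_withDensity (hfin p)
  haveI hngf : IsFiniteMeasure (n.withDensity g) := isFiniteMeasure_withDensity (hfin n)
  set j3 : JordanDecomposition Ω :=
    ⟨p.withDensity g, n.withDensity g,
      ((jdMap (jdRestrict μ.toJordanDecomposition S) e).mutuallySingular).mono_ac
        (withDensity_absolutelyContinuous _ _) (withDensity_absolutelyContinuous _ _)⟩ with hj3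
  -- Step 3: Sstar μt = j3.toSignedMeasure
  have hwinv_nonneg : ∀ x, (0:ℝ) ≤ (w x)⁻¹ := fun x => inv_nonneg.2 (hwpos x).le
  have hint : ∀ (m : Measure Ω) [IsFiniteMeasure m] (B : Set Ω), MeasurableSet B →
      (∫ x in B, (w x)⁻¹ ∂m) = (m.withDensity g B).toReal := by
    intro m _ B hB
    rw [MeasureTheory.integral_eq_lintegral_of_nonneg_ae
      (Filter.Eventually.of_forall fun x => hwinv_nonneg x)
      ((hw.inv₀ fun x => (hwpos x).ne').aestronglyMeasurable)]
    rw [withDensity_apply _ hB]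
  have hj4 : (Sstar μt).toJordanDecomposition = j3 := by
    apply MeasureTheory.SignedMeasure.toJordanDecomposition_eq
    ext B hB
    rw [hSstar μt B hB, signedSetIntegral, hj2]
    show (∫ x in B, (w x)⁻¹ ∂p) - (∫ x in B, (w x)⁻¹ ∂n) = _
    rw [hint p B hB, hint n B hB, JordanDecomposition.toSignedMeasure,
      Measure.toSignedMeasure_sub_apply hB]
    rfl
  -- Step 4: compute the total variation at univ
  have htv : (Sstar μt).totalVariation Set.univ =
      ∫⁻ x in S, g (α.symm x) ∂(μ.totalVariation) := by
    rw [SignedMeasure.totalVariation, hj4]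
    show (p.withDensity g + n.withDensity g) Set.univ = _
    rw [Measure.add_apply, withDensity_apply _ MeasurableSet.univ,
      withDensity_apply _ MeasurableSet.univ, Measure.restrict_univ, Measure.restrict_univ,
      hp, hnn, hee, lintegral_map hgm hem, lintegral_map hgm hem]
    have : ∀ (m : Measure Ω), ∫⁻ x, g (α.symm x) ∂(m.restrict S)
        = ∫⁻ x in S, g (α.symm x) ∂m := fun m => rfl
    rw [this, this, SignedMeasure.totalVariation, Measure.restrict_add,
      lintegral_add_measure]
  -- Step 5: the bound
  set c : ℝ := sSup ((fun t => (w (α.symm t))⁻¹) '' S) with hc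
  have himbdd : BddAbove ((fun t => (w (α.symm t))⁻¹) '' S) := by
    refine hwinvbdd.mono ?_
    rintro _ ⟨t, -, rfl⟩
    exact ⟨α.symm t, rfl⟩
  have hcnonneg : 0 ≤ c := by
    rcases S.eq_empty_or_nonempty with hSe | ⟨x, hx⟩
    · rw [hc, hSe, Set.image_empty, Real.sSup_empty]
    · exact le_trans (hwinv_nonneg (α.symm x)) (le_csSup himbdd ⟨x, hx, rfl⟩)
  have hbound : ∫⁻ x in S, g (α.symm x) ∂(μ.totalVariation) ≤
      ENNReal.ofReal c * μ.totalVariation Set.univ := by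
    calc ∫⁻ x in S, g (α.symm x) ∂(μ.totalVariation)
        ≤ ∫⁻ _ in S, ENNReal.ofReal c ∂(μ.totalVariation) := by
          refine setLIntegral_mono' hSm fun x hx => ?_
          exact ENNReal.ofReal_le_ofReal (le_csSup himbdd ⟨x, hx, rfl⟩)
      _ = ENNReal.ofReal c * μ.totalVariation S := setLIntegral_const _ _
      _ ≤ ENNReal.ofReal c * μ.totalVariation Set.univ := by
          exact mul_le_mul_right (measure_mono (Set.subset_univ _)) _
  haveI htvfin : IsFiniteMeasure μ.totalVariation := by
    unfold SignedMeasure.totalVariation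
    infer_instance
  have hne : ENNReal.ofReal c * μ.totalVariation Set.univ ≠ ⊤ :=
    ENNReal.mul_ne_top ENNReal.ofReal_ne_top (measure_ne_top _ _)
  calc ((Sstar μt).totalVariation Set.univ).toReal
      ≤ (ENNReal.ofReal c * μ.totalVariation Set.univ).toReal := by
        rw [htv]; exact ENNReal.toReal_mono hne hbound
    _ = c * (μ.totalVariation Set.univ).toReal := by
        rw [ENNReal.toReal_mul, ENNReal.toReal_ofReal hcnonneg]
end

section
/- Let α be a homeomorphism of a locally compact Hausdorff space Ω and w continuous positive bounded with bounded inverse. Suppose for each compact K ⊆ Ω: (a) lim_{n→∞} (sup_{t∈K} ∏_{j=0}^{n−1} w(α^j(t))) · (sup_{t∈K} ∏_{j=1}^{n} w(α^{-j}(t))⁻¹) = 0, and (b) lim_{n→∞} sup_{t∈K} ∏_{j=1}^{2n} w(α^{-j}(t))⁻¹ = 0. Then for all nonempty open U₁, U₂ ⊆ M(Ω) there exist N ∈ ℕ and positive scalars (λ_n)_{n≥N} such that λ_n·C_n*(U₁) ∩ U₂ ≠ ∅ for all n ≥ N, where C_n* = ½((T*)ⁿ + (S*)ⁿ) with T* the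 adjoint of T_{α,w} on M(Ω) and S* the adjoint of T_{α,w}⁻¹. -/
open MeasureTheory Filter

/-- A set of signed measures is open with respect to the total variation norm. -/
def TVOpen {Ω : Type} [MeasurableSpace Ω] (U : Set (SignedMeasure Ω)) : Prop :=
  ∀ μ ∈ U, ∃ ε : ℝ, 0 < ε ∧
    ∀ ν : SignedMeasure Ω, ((ν - μ).totalVariation Set.univ).toReal < ε → ν ∈ U


set_option linter.unusedSectionVars false
set_option linter.unusedVariables false
set_option maxHeartbeats 1000000

namespace S19

section basic
variable {Ω : Type} [MeasurableSpace Ω]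

noncomputable def SM (p q : Measure Ω) : SignedMeasure Ω :=
  @dite _ (IsFiniteMeasure p ∧ IsFiniteMeasure q) (Classical.dec _)
    (fun h => (@Measure.toSignedMeasure _ _ p h.1) - (@Measure.toSignedMeasure _ _ q h.2))
    (fun _ => 0)

lemma SM_def (p q : Measure Ω) [hp : IsFiniteMeasure p] [hq : IsFiniteMeasure q] :
    SM p q = p.toSignedMeasure - q.toSignedMeasure := by
  rw [SM, dif_pos ⟨hp, hq⟩]

lemma SM_apply (p q : Measure Ω) [hp : IsFiniteMeasure p] [hq : IsFiniteMeasure q] {E : Set Ω}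
    (hE : MeasurableSet E) : SM p q E = (p E).toReal - (q E).toReal := by
  rw [SM_def]
  simp only [MeasureTheory.VectorMeasure.sub_apply,
    Measure.toSignedMeasure_apply_measurable hE, measureReal_def]

lemma jordan_SM (p q : Measure Ω) [IsFiniteMeasure p] [IsFiniteMeasure q] {E : Set Ω}
    (hE : MeasurableSet E) :
    (SM p q).toJordanDecomposition.posPart E + q E
      = (SM p q).toJordanDecomposition.negPart E + p E := by
  have h := (SM p q).toSignedMeasure_toJordanDecomposition
  have h2 : (SM p q).toJordanDecomposition.toSignedMeasure E = SM p q E := by rw [h]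
  rw [JordanDecomposition.toSignedMeasure] at h2
  rw [MeasureTheory.VectorMeasure.sub_apply,
    Measure.toSignedMeasure_apply_measurable hE,
    Measure.toSignedMeasure_apply_measurable hE, SM_apply p q hE] at h2
  have hpos := measure_ne_top (SM p q).toJordanDecomposition.posPart E
  have hneg := measure_ne_top (SM p q).toJordanDecomposition.negPart E
  have hp := measure_ne_top p E
  have hq := measure_ne_top q E
  have : ((SM p q).toJordanDecomposition.posPart E + q E).toReal
      = ((SM p q).toJordanDecomposition.negPart E + p E).toReal := by
    rw [ENNReal.toReal_add hpos hq, ENNReal.toReal_add hneg hp]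
    simp only [measureReal_def] at h2
    linarith
  exact (ENNReal.toReal_eq_toReal_iff' (by finiteness) (by finiteness)).mp this

lemma tv_SM_le (p q : Measure Ω) [IsFiniteMeasure p] [IsFiniteMeasure q] :
    (SM p q).totalVariation Set.univ ≤ p Set.univ + q Set.univ := by
  obtain ⟨s, hs, hps, hqs⟩ := (SM p q).toJordanDecomposition.mutuallySingular
  set P := (SM p q).toJordanDecomposition.posPart with hP
  set N := (SM p q).toJordanDecomposition.negPart with hN
  have h1 : P Set.univ ≤ p Set.univ := by
    have h0 : P Set.univ = P sᶜ := by
      have h00 : P Set.univ = P s + P sᶜ := (measure_add_measure_compl hs).symm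
      rw [h00, hps, zero_add]
    rw [h0]
    calc P sᶜ ≤ P sᶜ + q sᶜ := le_self_add
    _ = N sᶜ + p sᶜ := jordan_SM p q hs.compl
    _ = p sᶜ := by rw [hqs, zero_add]
    _ ≤ p Set.univ := measure_mono (Set.subset_univ _)
  have h2 : N Set.univ ≤ q Set.univ := by
    calc N Set.univ = N s + N sᶜ := (measure_add_measure_compl hs).symm
    _ = N s := by rw [hqs, add_zero]
    _ ≤ N s + p s := le_self_add
    _ = P s + q s := (jordan_SM p q hs).symm
    _ = q s := by rw [hps, zero_add]
    _ ≤ q Set.univ := measure_mono (Set.subset_univ _)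
  calc (SM p q).totalVariation Set.univ = P Set.univ + N Set.univ := rfl
  _ ≤ p Set.univ + q Set.univ := add_le_add h1 h2

lemma integrable_of_bound {m : Measure Ω} [IsFiniteMeasure m] {f : Ω → ℝ} (hf : Measurable f)
    (C : ℝ) (hC : ∀ x, |f x| ≤ C) : Integrable f m :=
  ⟨hf.aestronglyMeasurable, HasFiniteIntegral.of_bounded (C := C) (Filter.Eventually.of_forall hC)⟩

lemma ssi_SM (p q : Measure Ω) [IsFiniteMeasure p] [IsFiniteMeasure q] {E : Set Ω}
    (hE : MeasurableSet E) {f : Ω → ℝ} (hf : Measurable f) (C : ℝ) (hC : ∀ x, |f x| ≤ C) :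
    signedSetIntegral (SM p q) E f = (∫ x in E, f x ∂p) - ∫ x in E, f x ∂q := by
  set P := (SM p q).toJordanDecomposition.posPart with hP
  set N := (SM p q).toJordanDecomposition.negPart with hN
  have hmeq : P.restrict E + q.restrict E = N.restrict E + p.restrict E := by
    ext A hA
    simp only [Measure.add_apply, Measure.restrict_apply hA]
    exact jordan_SM p q (hA.inter hE)
  have h1 : (∫ x in E, f x ∂P) + ∫ x in E, f x ∂q = (∫ x in E, f x ∂N) + ∫ x in E, f x ∂p := by
    rw [← integral_add_measure (integrable_of_bound hf C hC) (integrable_of_bound hf C hC),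
      ← integral_add_measure (integrable_of_bound hf C hC) (integrable_of_bound hf C hC), hmeq]
  unfold signedSetIntegral
  rw [← hP, ← hN]
  linarith

lemma fin_smul (m : Measure Ω) [IsFiniteMeasure m] (r : ℝ) :
    IsFiniteMeasure (ENNReal.ofReal r • m) := by
  constructor
  rw [Measure.smul_apply, smul_eq_mul]
  exact ENNReal.mul_lt_top ENNReal.ofReal_lt_top (measure_lt_top _ _)

lemma SM_add (p q p' q' : Measure Ω) [IsFiniteMeasure p] [IsFiniteMeasure q]
    [IsFiniteMeasure p'] [IsFiniteMeasure q'] :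
    SM p q + SM p' q' = SM (p + p') (q + q') := by
  rw [SM_def, SM_def, SM_def, Measure.toSignedMeasure_add, Measure.toSignedMeasure_add]
  abel

lemma SM_sub (p q p' q' : Measure Ω) [IsFiniteMeasure p] [IsFiniteMeasure q]
    [IsFiniteMeasure p'] [IsFiniteMeasure q'] :
    SM p q - SM p' q' = SM (p + q') (q + p') := by
  rw [SM_def, SM_def, SM_def, Measure.toSignedMeasure_add, Measure.toSignedMeasure_add]
  abel

lemma SM_smul (p q : Measure Ω) [IsFiniteMeasure p] [IsFiniteMeasure q] (r : ℝ) (hr : 0 ≤ r) :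
    r • SM p q = SM (ENNReal.ofReal r • p) (ENNReal.ofReal r • q) := by
  haveI := fin_smul p r
  haveI := fin_smul q r
  ext E hE
  rw [MeasureTheory.VectorMeasure.smul_apply, SM_apply _ _ hE, SM_apply _ _ hE]
  simp only [Measure.smul_apply, smul_eq_mul]
  rw [ENNReal.toReal_mul, ENNReal.toReal_mul, ENNReal.toReal_ofReal hr]
  ring

lemma SM_congr (p q p' q' : Measure Ω) [IsFiniteMeasure p] [IsFiniteMeasure q]
    [IsFiniteMeasure p'] [IsFiniteMeasure q'] (h : p + q' = p' + q) :
    SM p q = SM p' q' := by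
  ext E hE
  rw [SM_apply _ _ hE, SM_apply _ _ hE]
  have h2 : p E + q' E = p' E + q E := by
    rw [← Measure.add_apply, ← Measure.add_apply, h]
  have h3 : (p E).toReal + (q' E).toReal = (p' E).toReal + (q E).toReal := by
    rw [← ENNReal.toReal_add (by finiteness) (by finiteness),
      ← ENNReal.toReal_add (by finiteness) (by finiteness), h2]
  linarith

end basic

section ops
variable {Ω : Type} [TopologicalSpace Ω] [MeasurableSpace Ω] [BorelSpace Ω]
variable (α : Homeomorph Ω Ω) (w : Ω → ℝ)

noncomputable def dS : Ω → ENNReal := fun x => ENNReal.ofReal (w x)⁻¹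
noncomputable def dT : Ω → ENNReal := fun x => ENNReal.ofReal (w (α.symm x))
noncomputable def Phi (m : Measure Ω) : Measure Ω := (m.map ⇑α.symm).withDensity (dS w)
noncomputable def Psi (m : Measure Ω) : Measure Ω := (m.map ⇑α).withDensity (dT α w)
noncomputable def fprod (n : ℕ) (t : Ω) : ℝ := ∏ j ∈ Finset.range n, (w ((⇑α.symm)^[j + 1] t))⁻¹
noncomputable def Fprod (n : ℕ) (t : Ω) : ℝ := ∏ j ∈ Finset.range n, w ((⇑α)^[j] t)

omit [MeasurableSpace Ω] [BorelSpace Ω] in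
lemma fprod_nonneg (hwpos : ∀ x, 0 < w x) (n : ℕ) (t : Ω) : 0 ≤ fprod α w n t :=
  Finset.prod_nonneg fun _ _ => inv_nonneg.2 (hwpos _).le

omit [MeasurableSpace Ω] [BorelSpace Ω] in
lemma Fprod_nonneg (hwpos : ∀ x, 0 < w x) (n : ℕ) (t : Ω) : 0 ≤ Fprod α w n t :=
  Finset.prod_nonneg fun _ _ => (hwpos _).le

omit [MeasurableSpace Ω] [BorelSpace Ω] in
lemma fprod_le (hwpos : ∀ x, 0 < w x) (M' : ℝ) (hM' : ∀ x, (w x)⁻¹ ≤ M') (n : ℕ) (t : Ω) :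
    fprod α w n t ≤ M' ^ n := by
  calc fprod α w n t ≤ ∏ j ∈ Finset.range n, M' :=
        Finset.prod_le_prod (fun _ _ => inv_nonneg.2 (hwpos _).le) (fun _ _ => hM' _)
  _ = M' ^ n := by rw [Finset.prod_const, Finset.card_range]

omit [MeasurableSpace Ω] [BorelSpace Ω] in
lemma Fprod_le (hwpos : ∀ x, 0 < w x) (M : ℝ) (hM : ∀ x, w x ≤ M) (n : ℕ) (t : Ω) :
    Fprod α w n t ≤ M ^ n := by
  calc Fprod α w n t ≤ ∏ j ∈ Finset.range n, M :=
        Finset.prod_le_prod (fun _ _ => (hwpos _).le) (fun _ _ => hM _)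
  _ = M ^ n := by rw [Finset.prod_const, Finset.card_range]

omit [MeasurableSpace Ω] [BorelSpace Ω] in
lemma fprod_continuous (hw : Continuous w) (hwpos : ∀ x, 0 < w x) (n : ℕ) :
    Continuous (fprod α w n) := by
  apply continuous_finset_prod
  intro j _
  exact (hw.comp (α.symm.continuous.iterate (j+1))).inv₀ fun t => (hwpos _).ne'

omit [MeasurableSpace Ω] [BorelSpace Ω] in
lemma Fprod_continuous (hw : Continuous w) (n : ℕ) : Continuous (Fprod α w n) := by
  apply continuous_finset_prod
  intro j _
  exact hw.comp (α.continuous.iterate j)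

lemma meas_dS (hw : Continuous w) : Measurable (dS w) :=
  (ENNReal.measurable_ofReal.comp (hw.measurable.inv))
lemma meas_dT (hw : Continuous w) : Measurable (dT α w) :=
  (ENNReal.measurable_ofReal.comp ((hw.comp α.symm.continuous).measurable))

omit [MeasurableSpace Ω] [BorelSpace Ω] in
lemma fprod_succ (n : ℕ) (x : Ω) :
    fprod α w (n + 1) x = (w (α.symm x))⁻¹ * fprod α w n (α.symm x) := by
  unfold fprod
  rw [Finset.prod_range_succ']
  simp only [Function.iterate_succ_apply]
  ring_nf
  congr 1

omit [MeasurableSpace Ω] [BorelSpace Ω] in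
lemma Fprod_succ (n : ℕ) (x : Ω) :
    Fprod α w (n + 1) x = w x * Fprod α w n (α x) := by
  unfold Fprod
  rw [Finset.prod_range_succ']
  simp only [Function.iterate_succ_apply, Function.iterate_zero_apply]
  ring

variable (hw : Continuous w) (hwpos : ∀ x, 0 < w x)

include hw in
lemma lintegral_Phi (m : Measure Ω) {g : Ω → ENNReal} (hg : Measurable g) :
    ∫⁻ x, g x ∂(Phi α w m) = ∫⁻ x, dS w (α.symm x) * g (α.symm x) ∂m := by
  rw [Phi, lintegral_withDensity_eq_lintegral_mul _ (meas_dS w hw) hg]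
  simp only [Pi.mul_apply]
  rw [lintegral_map (f := fun a => dS w a * g a) ((meas_dS w hw).mul hg) α.symm.measurable]

include hw in
lemma lintegral_Psi (m : Measure Ω) {g : Ω → ENNReal} (hg : Measurable g) :
    ∫⁻ x, g x ∂(Psi α w m) = ∫⁻ x, dT α w (α x) * g (α x) ∂m := by
  rw [Psi, lintegral_withDensity_eq_lintegral_mul _ (meas_dT α w hw) hg]
  simp only [Pi.mul_apply]
  rw [lintegral_map (f := fun a => dT α w a * g a) ((meas_dT α w hw).mul hg) α.measurable]

include hw hwpos in
lemma Phi_iterate_univ (n : ℕ) (m : Measure Ω) :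
    (Phi α w)^[n] m Set.univ = ∫⁻ x, ENNReal.ofReal (fprod α w n x) ∂m := by
  induction n generalizing m with
  | zero => simp [fprod]
  | succ n ih =>
    rw [Function.iterate_succ_apply, ih]
    have hmeas : Measurable fun x => ENNReal.ofReal (fprod α w n x) :=
      ENNReal.measurable_ofReal.comp (by
        apply Finset.measurable_prod
        intro j _
        exact ((hw.comp (α.symm.continuous.iterate (j+1))).measurable).inv)
    rw [show (∫⁻ x, ENNReal.ofReal (fprod α w n x) ∂(Phi α w m))
        = ∫⁻ x, dS w (α.symm x) * ENNReal.ofReal (fprod α w n (α.symm x)) ∂m from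
      lintegral_Phi α w hw m hmeas]
    congr 1
    funext x
    rw [dS, ← ENNReal.ofReal_mul (inv_nonneg.2 (hwpos _).le), ← fprod_succ]

include hw hwpos in
lemma Psi_iterate_univ (n : ℕ) (m : Measure Ω) :
    (Psi α w)^[n] m Set.univ = ∫⁻ x, ENNReal.ofReal (Fprod α w n x) ∂m := by
  induction n generalizing m with
  | zero => simp [Fprod]
  | succ n ih =>
    rw [Function.iterate_succ_apply, ih]
    have hmeas : Measurable fun x => ENNReal.ofReal (Fprod α w n x) :=
      ENNReal.measurable_ofReal.comp (by
        apply Finset.measurable_prod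
        intro j _
        exact (hw.comp (α.continuous.iterate j)).measurable)
    rw [show (∫⁻ x, ENNReal.ofReal (Fprod α w n x) ∂(Psi α w m))
        = ∫⁻ x, dT α w (α x) * ENNReal.ofReal (Fprod α w n (α x)) ∂m from
      lintegral_Psi α w hw m hmeas]
    congr 1
    funext x
    rw [dT, α.symm_apply_apply, ← ENNReal.ofReal_mul (hwpos _).le, ← Fprod_succ]

include hw hwpos in
lemma fin_Phi_iterate (M' : ℝ) (hM' : ∀ x, (w x)⁻¹ ≤ M') (n : ℕ) (m : Measure Ω)
    [IsFiniteMeasure m] : IsFiniteMeasure ((Phi α w)^[n] m) := by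
  constructor
  rw [Phi_iterate_univ α w hw hwpos]
  calc ∫⁻ x, ENNReal.ofReal (fprod α w n x) ∂m
      ≤ ∫⁻ _, ENNReal.ofReal (M' ^ n) ∂m := by
        apply lintegral_mono
        intro x
        exact ENNReal.ofReal_le_ofReal (fprod_le α w hwpos M' hM' n x)
  _ = ENNReal.ofReal (M' ^ n) * m Set.univ := by rw [lintegral_const]
  _ < ⊤ := ENNReal.mul_lt_top ENNReal.ofReal_lt_top (measure_lt_top _ _)

include hw hwpos in
lemma fin_Psi_iterate (M : ℝ) (hM : ∀ x, w x ≤ M) (n : ℕ) (m : Measure Ω)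
    [IsFiniteMeasure m] : IsFiniteMeasure ((Psi α w)^[n] m) := by
  constructor
  rw [Psi_iterate_univ α w hw hwpos]
  calc ∫⁻ x, ENNReal.ofReal (Fprod α w n x) ∂m
      ≤ ∫⁻ _, ENNReal.ofReal (M ^ n) ∂m := by
        apply lintegral_mono
        intro x
        exact ENNReal.ofReal_le_ofReal (Fprod_le α w hwpos M hM n x)
  _ = ENNReal.ofReal (M ^ n) * m Set.univ := by rw [lintegral_const]
  _ < ⊤ := ENNReal.mul_lt_top ENNReal.ofReal_lt_top (measure_lt_top _ _)

include hw in
lemma withDensity_map_homeo (ν : Measure Ω) {d : Ω → ENNReal} (hd : Measurable d) :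
    (ν.withDensity d).map ⇑α = (ν.map ⇑α).withDensity (d ∘ ⇑α.symm) := by
  ext E hE
  rw [Measure.map_apply α.measurable hE, withDensity_apply _ (α.measurable hE),
    withDensity_apply _ hE,
    setLIntegral_map hE (hd.comp α.symm.measurable) α.measurable]
  simp only [Function.comp_apply, α.symm_apply_apply]

include hw hwpos in
lemma Psi_Phi (m : Measure Ω) : Psi α w (Phi α w m) = m := by
  rw [Psi, Phi, withDensity_map_homeo α w hw _ (meas_dS w hw)]
  rw [Measure.map_map α.measurable α.symm.measurable]
  have h1 : (⇑α ∘ ⇑α.symm) = id := by funext x; simp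
  rw [h1, Measure.map_id]
  rw [← withDensity_mul _ ((meas_dS w hw).comp α.symm.measurable) (meas_dT α w hw)]
  have h2 : ((dS w ∘ ⇑α.symm) * dT α w) = 1 := by
    funext x
    simp only [Pi.mul_apply, Function.comp_apply, dS, dT, Pi.one_apply]
    rw [← ENNReal.ofReal_mul (inv_nonneg.2 (hwpos _).le),
      inv_mul_cancel₀ (hwpos _).ne', ENNReal.ofReal_one]
  rw [h2, withDensity_one]

lemma Phi_add (m₁ m₂ : Measure Ω) : Phi α w (m₁ + m₂) = Phi α w m₁ + Phi α w m₂ := by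
  rw [Phi, Measure.map_add _ _ α.symm.measurable, withDensity_add_measure]; rfl

lemma Psi_add (m₁ m₂ : Measure Ω) : Psi α w (m₁ + m₂) = Psi α w m₁ + Psi α w m₂ := by
  rw [Psi, Measure.map_add _ _ α.measurable, withDensity_add_measure]; rfl

lemma Phi_smul (c : ENNReal) (m : Measure Ω) : Phi α w (c • m) = c • Phi α w m := by
  rw [Phi, Measure.map_smul, withDensity_smul_measure]; rfl

lemma Psi_smul (c : ENNReal) (m : Measure Ω) : Psi α w (c • m) = c • Psi α w m := by
  rw [Psi, Measure.map_smul, withDensity_smul_measure]; rfl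

lemma Phi_iterate_add (n : ℕ) (m₁ m₂ : Measure Ω) :
    (Phi α w)^[n] (m₁ + m₂) = (Phi α w)^[n] m₁ + (Phi α w)^[n] m₂ := by
  induction n generalizing m₁ m₂ with
  | zero => rfl
  | succ n ih => rw [Function.iterate_succ_apply, Function.iterate_succ_apply,
      Function.iterate_succ_apply, Phi_add, ih]

lemma Psi_iterate_add (n : ℕ) (m₁ m₂ : Measure Ω) :
    (Psi α w)^[n] (m₁ + m₂) = (Psi α w)^[n] m₁ + (Psi α w)^[n] m₂ := by
  induction n generalizing m₁ m₂ with
  | zero => rfl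
  | succ n ih => rw [Function.iterate_succ_apply, Function.iterate_succ_apply,
      Function.iterate_succ_apply, Psi_add, ih]

lemma Phi_iterate_smul (n : ℕ) (c : ENNReal) (m : Measure Ω) :
    (Phi α w)^[n] (c • m) = c • (Phi α w)^[n] m := by
  induction n generalizing m with
  | zero => rfl
  | succ n ih => rw [Function.iterate_succ_apply, Function.iterate_succ_apply, Phi_smul, ih]

lemma Psi_iterate_smul (n : ℕ) (c : ENNReal) (m : Measure Ω) :
    (Psi α w)^[n] (c • m) = c • (Psi α w)^[n] m := by
  induction n generalizing m with
  | zero => rfl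
  | succ n ih => rw [Function.iterate_succ_apply, Function.iterate_succ_apply, Psi_smul, ih]

include hw hwpos in
lemma Psi_Phi_iterate (n : ℕ) (m : Measure Ω) : (Psi α w)^[n] ((Phi α w)^[n] m) = m := by
  induction n generalizing m with
  | zero => rfl
  | succ n ih =>
    rw [Function.iterate_succ_apply', Function.iterate_succ_apply, ih (Phi α w m),
      Psi_Phi α w hw hwpos]

include hw hwpos in
lemma fin_Phi (M' : ℝ) (hM' : ∀ x, (w x)⁻¹ ≤ M') (m : Measure Ω) [IsFiniteMeasure m] :
    IsFiniteMeasure (Phi α w m) := by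
  have h := fin_Phi_iterate α w hw hwpos M' hM' 1 m
  simpa using h

include hw hwpos in
lemma fin_Psi (M : ℝ) (hM : ∀ x, w x ≤ M) (m : Measure Ω) [IsFiniteMeasure m] :
    IsFiniteMeasure (Psi α w m) := by
  have h := fin_Psi_iterate α w hw hwpos M hM 1 m
  simpa using h

end ops

section bridge
variable {Ω : Type} [TopologicalSpace Ω] [MeasurableSpace Ω] [BorelSpace Ω]
variable (α : Homeomorph Ω Ω) (w : Ω → ℝ)
variable (hw : Continuous w) (hwpos : ∀ x, 0 < w x)

lemma SM_map (p q : Measure Ω) [IsFiniteMeasure p] [IsFiniteMeasure q] {φ : Ω → Ω}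
    (hφ : Measurable φ) : (SM p q).map φ = SM (p.map φ) (q.map φ) := by
  ext E hE
  rw [MeasureTheory.VectorMeasure.map_apply _ hφ hE, SM_apply _ _ (hφ hE), SM_apply _ _ hE,
    Measure.map_apply hφ hE, Measure.map_apply hφ hE]

lemma setIntegral_withDensity (m : Measure Ω) {f : Ω → ℝ} (hf : Measurable f)
    (h0 : ∀ x, 0 ≤ f x) {E : Set Ω} (hE : MeasurableSet E) :
    ∫ x in E, f x ∂m = ((m.withDensity (fun x => ENNReal.ofReal (f x))) E).toReal := by
  rw [withDensity_apply _ hE,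
    integral_eq_lintegral_of_nonneg_ae (Filter.Eventually.of_forall h0)
      hf.aestronglyMeasurable.restrict]

include hw hwpos in
lemma Sstar_SM (Sstar : SignedMeasure Ω → SignedMeasure Ω)
    (hS : ∀ (μ : SignedMeasure Ω) (E : Set Ω), MeasurableSet E →
      Sstar μ E = signedSetIntegral (μ.map ⇑α.symm) E (fun t => (w t)⁻¹))
    (M' : ℝ) (hM' : ∀ x, (w x)⁻¹ ≤ M')
    (p q : Measure Ω) [IsFiniteMeasure p] [IsFiniteMeasure q] :
    Sstar (SM p q) = SM (Phi α w p) (Phi α w q) := by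
  haveI := fin_Phi α w hw hwpos M' hM' p
  haveI := fin_Phi α w hw hwpos M' hM' q
  ext E hE
  rw [hS _ _ hE, SM_map p q α.symm.measurable,
    ssi_SM _ _ hE (f := fun t => (w t)⁻¹) hw.measurable.inv M'
      (fun x => by rw [abs_of_nonneg (inv_nonneg.2 (hwpos x).le)]; exact hM' x),
    setIntegral_withDensity _ (f := fun t => (w t)⁻¹) hw.measurable.inv (fun x => inv_nonneg.2 (hwpos x).le) hE,
    setIntegral_withDensity _ (f := fun t => (w t)⁻¹) hw.measurable.inv (fun x => inv_nonneg.2 (hwpos x).le) hE,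
    SM_apply _ _ hE]
  rfl

include hw hwpos in
lemma Tstar_SM (Tstar : SignedMeasure Ω → SignedMeasure Ω)
    (hT : ∀ (μ : SignedMeasure Ω) (E : Set Ω), MeasurableSet E →
      Tstar μ E = signedSetIntegral (μ.map ⇑α) E (fun x => w (α.symm x)))
    (M : ℝ) (hM : ∀ x, w x ≤ M)
    (p q : Measure Ω) [IsFiniteMeasure p] [IsFiniteMeasure q] :
    Tstar (SM p q) = SM (Psi α w p) (Psi α w q) := by
  haveI := fin_Psi α w hw hwpos M hM p
  haveI := fin_Psi α w hw hwpos M hM q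
  ext E hE
  have hfm : Measurable (fun x => w (α.symm x)) := (hw.comp α.symm.continuous).measurable
  rw [hT _ _ hE, SM_map p q α.measurable,
    ssi_SM _ _ hE hfm M
      (fun x => by rw [abs_of_nonneg (hwpos _).le]; exact hM _),
    setIntegral_withDensity _ hfm (fun x => (hwpos _).le) hE,
    setIntegral_withDensity _ hfm (fun x => (hwpos _).le) hE,
    SM_apply _ _ hE]
  rfl

include hw hwpos in
lemma Sstar_iter_SM (Sstar : SignedMeasure Ω → SignedMeasure Ω)
    (hS : ∀ (μ : SignedMeasure Ω) (E : Set Ω), MeasurableSet E →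
      Sstar μ E = signedSetIntegral (μ.map ⇑α.symm) E (fun t => (w t)⁻¹))
    (M' : ℝ) (hM' : ∀ x, (w x)⁻¹ ≤ M')
    (p q : Measure Ω) [IsFiniteMeasure p] [IsFiniteMeasure q] (n : ℕ) :
    Sstar^[n] (SM p q) = SM ((Phi α w)^[n] p) ((Phi α w)^[n] q) := by
  induction n with
  | zero => rfl
  | succ n ih =>
    haveI := fin_Phi_iterate α w hw hwpos M' hM' n p
    haveI := fin_Phi_iterate α w hw hwpos M' hM' n q
    rw [Function.iterate_succ_apply', ih,
      Sstar_SM α w hw hwpos Sstar hS M' hM' _ _,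
      ← Function.iterate_succ_apply' (Phi α w), ← Function.iterate_succ_apply' (Phi α w)]

include hw hwpos in
lemma Tstar_iter_SM (Tstar : SignedMeasure Ω → SignedMeasure Ω)
    (hT : ∀ (μ : SignedMeasure Ω) (E : Set Ω), MeasurableSet E →
      Tstar μ E = signedSetIntegral (μ.map ⇑α) E (fun x => w (α.symm x)))
    (M : ℝ) (hM : ∀ x, w x ≤ M)
    (p q : Measure Ω) [IsFiniteMeasure p] [IsFiniteMeasure q] (n : ℕ) :
    Tstar^[n] (SM p q) = SM ((Psi α w)^[n] p) ((Psi α w)^[n] q) := by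
  induction n with
  | zero => rfl
  | succ n ih =>
    haveI := fin_Psi_iterate α w hw hwpos M hM n p
    haveI := fin_Psi_iterate α w hw hwpos M hM n q
    rw [Function.iterate_succ_apply', ih,
      Tstar_SM α w hw hwpos Tstar hT M hM _ _,
      ← Function.iterate_succ_apply' (Psi α w), ← Function.iterate_succ_apply' (Psi α w)]

end bridge
section analytic
variable {Ω : Type} [MeasurableSpace Ω]

lemma meas_gt_tendsto (m : Measure Ω) [IsFiniteMeasure m] {g : ℕ → Ω → ℝ}
    (hgm : ∀ n, Measurable (g n)) (hg0 : ∀ n x, 0 ≤ g n x)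
    (hgt : ∀ x, Tendsto (fun n => g n x) atTop (nhds 0)) {θ : ℝ} (hθ : 0 < θ) :
    Tendsto (fun n => m {x | θ < g n x}) atTop (nhds 0) := by
  have h := tendstoInMeasure_of_tendsto_ae (μ := m) (g := fun _ => (0:ℝ))
    (fun n => (hgm n).aestronglyMeasurable) (ae_of_all _ hgt)
  have h2 := h (ENNReal.ofReal θ) (ENNReal.ofReal_pos.2 hθ)
  apply tendsto_of_tendsto_of_tendsto_of_le_of_le tendsto_const_nhds h2
  · intro n; exact zero_le
  · intro n
    apply measure_mono
    intro x hx
    simp only [Set.mem_setOf_eq] at hx ⊢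
    rw [edist_dist, Real.dist_eq, sub_zero, abs_of_nonneg (hg0 n x)]
    exact ENNReal.ofReal_le_ofReal hx.le

lemma quantile (m : Measure Ω) [IsFiniteMeasure m] {g : ℕ → Ω → ℝ}
    (hgm : ∀ n, Measurable (g n)) (e : ENNReal) (he : 0 < e) :
    ∃ R : ℕ → ℝ, (∀ n, 0 ≤ R n) ∧ (∀ n (η : ℝ), 0 < η → m {x | R n + η < g n x} ≤ e)
      ∧ (∀ n r, 0 ≤ r → r < R n → e < m {x | r < g n x}) := by
  have hne : ∀ n, ∃ r : ℝ, 0 ≤ r ∧ m {x | r < g n x} ≤ e := by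
    intro n
    have hmono : Antitone (fun k : ℕ => {x | (k:ℝ) < g n x}) := by
      intro i j hij x hx
      simp only [Set.mem_setOf_eq] at hx ⊢
      exact lt_of_le_of_lt (by exact_mod_cast hij) hx
    have hempty : ⋂ k : ℕ, {x | (k:ℝ) < g n x} = ∅ := by
      ext x
      simp only [Set.mem_iInter, Set.mem_setOf_eq, Set.mem_empty_iff_false, iff_false, not_forall,
        not_lt]
      obtain ⟨k, hk⟩ := exists_nat_ge (g n x)
      exact ⟨k, hk⟩
    have htend := MeasureTheory.tendsto_measure_iInter_atTop (μ := m)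
      (fun k => (measurableSet_lt measurable_const (hgm n)).nullMeasurableSet)
      hmono ⟨0, measure_ne_top _ _⟩
    rw [hempty] at htend
    simp only [measure_empty] at htend
    obtain ⟨k, hk⟩ := (htend.eventually (Iio_mem_nhds he)).exists
    exact ⟨k, Nat.cast_nonneg k, hk.le⟩
  set Sn : ℕ → Set ℝ := fun n => {r : ℝ | 0 ≤ r ∧ m {x | r < g n x} ≤ e} with hSn
  have hnonempty : ∀ n, (Sn n).Nonempty := fun n => by
    obtain ⟨r, h1, h2⟩ := hne n; exact ⟨r, h1, h2⟩
  have hbdd : ∀ n, BddBelow (Sn n) := fun n => ⟨0, fun r hr => hr.1⟩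
  refine ⟨fun n => sInf (Sn n), fun n => le_csInf (hnonempty n) (fun r hr => hr.1), ?_, ?_⟩
  · intro n η hη
    obtain ⟨r, hrS, hrlt⟩ := (csInf_lt_iff (hbdd n) (hnonempty n)).mp
      (lt_add_of_pos_right (sInf (Sn n)) hη)
    calc m {x | sInf (Sn n) + η < g n x} ≤ m {x | r < g n x} := by
          apply measure_mono
          intro x hx
          simp only [Set.mem_setOf_eq] at hx ⊢
          exact lt_of_le_of_lt hrlt.le hx
    _ ≤ e := hrS.2
  · intro n r hr0 hrlt
    by_contra hc
    push_neg at hc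
    exact absurd (csInf_le (hbdd n) ⟨hr0, hc⟩) (not_le.mpr hrlt)

lemma quantile_tendsto_zero (m : Measure Ω) [IsFiniteMeasure m] {g : ℕ → Ω → ℝ}
    (e : ENNReal) (he : 0 < e) (R : ℕ → ℝ) (hR0 : ∀ n, 0 ≤ R n)
    (hq : ∀ n r, 0 ≤ r → r < R n → e < m {x | r < g n x})
    (hmeas : ∀ θ : ℝ, 0 < θ → Tendsto (fun n => m {x | θ < g n x}) atTop (nhds 0)) :
    Tendsto R atTop (nhds 0) := by
  rw [tendsto_order]
  constructor
  · intro a ha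
    exact Eventually.of_forall fun n => lt_of_lt_of_le ha (hR0 n)
  · intro a ha
    have h1 := (hmeas (a/2) (by linarith)).eventually (Iio_mem_nhds he)
    filter_upwards [h1] with n hn
    by_contra hc
    push_neg at hc
    have := hq n (a/2) (by linarith) (by linarith)
    exact absurd hn (not_lt.mpr this.le)

lemma key_product (m₁ m₂ : Measure Ω) [IsFiniteMeasure m₁] [IsFiniteMeasure m₂]
    (F f : ℕ → Ω → ℝ) (hFm : ∀ n, Measurable (F n)) (hfm : ∀ n, Measurable (f n))
    (hpair : ∀ t s, Tendsto (fun n => F n t * f n s) atTop (nhds 0))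
    (e₁ e₂ : ENNReal) (he₁ : 0 < e₁) (he₂ : 0 < e₂)
    (R θ : ℕ → ℝ) (hR0 : ∀ n, 0 ≤ R n) (hθ0 : ∀ n, 0 ≤ θ n)
    (hRq : ∀ n r, 0 ≤ r → r < R n → e₁ < m₁ {t | r < F n t})
    (hθq : ∀ n r, 0 ≤ r → r < θ n → e₂ < m₂ {s | r < f n s}) :
    Tendsto (fun n => R n * θ n) atTop (nhds 0) := by
  rw [tendsto_order]
  constructor
  · intro a ha
    exact Eventually.of_forall fun n => lt_of_lt_of_le ha (mul_nonneg (hR0 n) (hθ0 n))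
  · intro δ hδ
    by_contra hc
    have hfreq : ∃ᶠ n in atTop, δ ≤ R n * θ n := by
      rw [not_eventually] at hc
      apply hc.mono
      intro n hn
      push_neg at hn
      exact hn
    obtain ⟨φ, hφmono, hφ⟩ := extraction_of_frequently_atTop hfreq
    have hpos : ∀ k, 0 < R (φ k) ∧ 0 < θ (φ k) := by
      intro k
      have h := lt_of_lt_of_le hδ (hφ k)
      constructor
      · rcases lt_or_eq_of_le (hR0 (φ k)) with h1 | h1
        · exact h1
        · exfalso; rw [← h1, zero_mul] at h; exact lt_irrefl 0 h
      · rcases lt_or_eq_of_le (hθ0 (φ k)) with h1 | h1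
        · exact h1
        · exfalso; rw [← h1, mul_zero] at h; exact lt_irrefl 0 h
    set S : ℕ → Set Ω := fun k => {t | R (φ k) / 2 < F (φ k) t} with hS
    set Q : ℕ → Set Ω := fun k => {s | θ (φ k) / 2 < f (φ k) s} with hQ
    have hSm : ∀ k, MeasurableSet (S k) := fun k => measurableSet_lt measurable_const (hFm _)
    have hQm : ∀ k, MeasurableSet (Q k) := fun k => measurableSet_lt measurable_const (hfm _)
    have hSbig : ∀ k, e₁ < m₁ (S k) := fun k =>
      hRq (φ k) _ (by linarith [(hpos k).1]) (by linarith [(hpos k).1])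
    have hQbig : ∀ k, e₂ < m₂ (Q k) := fun k =>
      hθq (φ k) _ (by linarith [(hpos k).2]) (by linarith [(hpos k).2])
    set π := m₁.prod m₂ with hπ
    set V : ℕ → Set (Ω × Ω) := fun k => (S k) ×ˢ (Q k) with hV
    have hVm : ∀ k, MeasurableSet (V k) := fun k => (hSm k).prod (hQm k)
    have hVbig : ∀ k, e₁ * e₂ ≤ π (V k) := by
      intro k
      rw [hV, hπ]
      rw [Measure.prod_prod]
      exact mul_le_mul' (hSbig k).le (hQbig k).le
    set U : ℕ → Set (Ω × Ω) := fun N => ⋃ k, V (N + k) with hU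
    have hUm : ∀ N, MeasurableSet (U N) := fun N => MeasurableSet.iUnion fun k => hVm _
    have hUanti : Antitone U := by
      intro i j hij
      rw [hU]
      simp only
      intro x hx
      obtain ⟨k, hk⟩ := Set.mem_iUnion.mp hx
      apply Set.mem_iUnion.mpr
      exact ⟨j - i + k, by rw [show i + (j - i + k) = j + k by omega]; exact hk⟩
    have htend := MeasureTheory.tendsto_measure_iInter_atTop (μ := π)
      (fun N => (hUm N).nullMeasurableSet) hUanti ⟨0, measure_ne_top _ _⟩
    have hZbig : e₁ * e₂ ≤ π (⋂ N, U N) := by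
      apply ge_of_tendsto htend
      apply Eventually.of_forall
      intro N
      calc e₁ * e₂ ≤ π (V N) := hVbig N
      _ ≤ π (U N) := measure_mono (by
          intro x hx
          apply Set.mem_iUnion.mpr
          exact ⟨0, by rw [Nat.add_zero]; exact hx⟩)
    have hZne : (⋂ N, U N).Nonempty := by
      apply MeasureTheory.nonempty_of_measure_ne_zero (μ := π)
      intro h0
      rw [h0] at hZbig
      have : (0:ENNReal) < e₁ * e₂ := ENNReal.mul_pos he₁.ne' he₂.ne'
      exact absurd hZbig (not_le.mpr this)
    obtain ⟨⟨t, s⟩, hts⟩ := hZne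
    have hlim := hpair t s
    have hev := (hlim.eventually (Iio_mem_nhds (by linarith : (0:ℝ) < δ/4))).exists_forall_of_atTop
    obtain ⟨N₀, hN₀⟩ := hev
    have hmem := Set.mem_iInter.mp hts N₀
    obtain ⟨k, hk⟩ := Set.mem_iUnion.mp hmem
    obtain ⟨h1x, h2x⟩ := hk
    have h1 : R (φ (N₀ + k)) / 2 < F (φ (N₀ + k)) t := h1x
    have h2 : θ (φ (N₀ + k)) / 2 < f (φ (N₀ + k)) s := h2x
    have hidx : N₀ ≤ φ (N₀ + k) := le_trans (Nat.le_add_right _ _) (hφmono.le_apply)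
    have hlt := hN₀ (φ (N₀ + k)) hidx
    have hge : δ / 4 ≤ R (φ (N₀ + k)) / 2 * (θ (φ (N₀ + k)) / 2) := by
      have := hφ (N₀ + k)
      nlinarith [hδ.le]
    have hprod : R (φ (N₀ + k)) / 2 * (θ (φ (N₀ + k)) / 2) < F (φ (N₀ + k)) t * f (φ (N₀ + k)) s := by
      apply mul_lt_mul' h1.le h2 (by linarith [(hpos (N₀ + k)).2]) 
      linarith [(hpos (N₀ + k)).1, h1]
    linarith
end analytic

section helpers
variable {Ω : Type} [MeasurableSpace Ω]

lemma tv_bound (X Y : Measure Ω) [IsFiniteMeasure X] [IsFiniteMeasure Y]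
    (ξ : SignedMeasure Ω) (h : ξ = SM X Y) {ε : ℝ}
    (hbound : (X Set.univ).toReal + (Y Set.univ).toReal < ε) :
    ((ξ.totalVariation) Set.univ).toReal < ε := by
  rw [h]
  have h1 := tv_SM_le X Y
  have h2 : ((SM X Y).totalVariation Set.univ).toReal
      ≤ (X Set.univ + Y Set.univ).toReal :=
    ENNReal.toReal_mono (by finiteness) h1
  rw [ENNReal.toReal_add (by finiteness) (by finiteness)] at h2
  linarith

lemma restrict_mass_le (m : Measure Ω) [IsFiniteMeasure m] {A : Set Ω} (hA : MeasurableSet A)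
    {g : Ω → ℝ} {θ : ℝ} (hθ : 0 ≤ θ) (hbound : ∀ x ∈ A, g x ≤ θ) :
    ∫⁻ x, ENNReal.ofReal (g x) ∂(m.restrict A) ≤ ENNReal.ofReal θ * m Set.univ := by
  have h0 : ∫⁻ x, ENNReal.ofReal (g x) ∂(m.restrict A) = ∫⁻ x in A, ENNReal.ofReal (g x) ∂m := rfl
  rw [h0]
  calc ∫⁻ x in A, ENNReal.ofReal (g x) ∂m
      ≤ ∫⁻ _ in A, ENNReal.ofReal θ ∂m :=
        setLIntegral_mono measurable_const (fun x hx => ENNReal.ofReal_le_ofReal (hbound x hx))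
  _ = ENNReal.ofReal θ * m A := by rw [setLIntegral_const]
  _ ≤ ENNReal.ofReal θ * m Set.univ := mul_le_mul' le_rfl (measure_mono (Set.subset_univ _))

end helpers

section pointwise
variable {Ω : Type} [TopologicalSpace Ω] [MeasurableSpace Ω] [BorelSpace Ω]
variable (α : Homeomorph Ω Ω) (w : Ω → ℝ)

omit [MeasurableSpace Ω] [BorelSpace Ω] in
lemma pair_limit (hwpos : ∀ x, 0 < w x)
    (ha : ∀ K : Set Ω, IsCompact K →
      Tendsto
        (fun n : ℕ =>
          sSup ((fun t => ∏ j ∈ Finset.range n, w ((⇑α)^[j] t)) '' K) *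
            sSup ((fun t => ∏ j ∈ Finset.range n, (w ((⇑α.symm)^[j + 1] t))⁻¹) '' K))
        atTop (nhds 0)) (t s : Ω) :
    Tendsto (fun n => Fprod α w n t * fprod α w n s) atTop (nhds 0) := by
  have hK : IsCompact ({t, s} : Set Ω) := (Set.finite_singleton s).insert t |>.isCompact
  have h := ha {t, s} hK
  apply squeeze_zero (fun n => mul_nonneg (Fprod_nonneg α w hwpos n t) (fprod_nonneg α w hwpos n s))
    (fun n => ?_) h
  rw [Set.image_pair, Set.image_pair, csSup_pair, csSup_pair]
  have h1 : Fprod α w n t ≤ (fun u => ∏ j ∈ Finset.range n, w ((⇑α)^[j] u)) t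
      ⊔ (fun u => ∏ j ∈ Finset.range n, w ((⇑α)^[j] u)) s := le_sup_left
  have h2 : fprod α w n s ≤ (fun u => ∏ j ∈ Finset.range n, (w ((⇑α.symm)^[j+1] u))⁻¹) t
      ⊔ (fun u => ∏ j ∈ Finset.range n, (w ((⇑α.symm)^[j+1] u))⁻¹) s := le_sup_right
  exact mul_le_mul h1 h2 (fprod_nonneg α w hwpos n s)
    (le_trans (Fprod_nonneg α w hwpos n t) h1)

omit [MeasurableSpace Ω] [BorelSpace Ω] in
lemma fpoint_limit (hwpos : ∀ x, 0 < w x) (M' : ℝ) (hM' : ∀ x, (w x)⁻¹ ≤ M')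
    (hb : ∀ K : Set Ω, IsCompact K →
      Tendsto
        (fun n : ℕ =>
          sSup ((fun t => ∏ j ∈ Finset.range (2 * n), (w ((⇑α.symm)^[j + 1] t))⁻¹) '' K))
        atTop (nhds 0)) (t : Ω) :
    Tendsto (fun n => fprod α w n t) atTop (nhds 0) := by
  have h2 : Tendsto (fun n => fprod α w (2 * n) t) atTop (nhds 0) := by
    have h := hb {t} isCompact_singleton
    simp only [Set.image_singleton, csSup_singleton] at h
    exact h
  have hdiv : Tendsto (fun n : ℕ => n / 2) atTop atTop := by
    apply tendsto_atTop_atTop.mpr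
    intro b
    exact ⟨2 * b, fun n hn => by omega⟩
  have hcomp : Tendsto (fun n : ℕ => fprod α w (2 * (n / 2)) t) atTop (nhds 0) := h2.comp hdiv
  have hup : Tendsto (fun n : ℕ => max M' 1 * fprod α w (2 * (n / 2)) t) atTop (nhds 0) := by
    have := hcomp.const_mul (max M' 1)
    simpa using this
  apply squeeze_zero (fun n => fprod_nonneg α w hwpos n t) (fun n => ?_) hup
  rcases Nat.even_or_odd n with he | ho
  · obtain ⟨k, hk⟩ := he
    have hn2 : 2 * (n / 2) = n := by omega
    rw [hn2]
    exact le_mul_of_one_le_left (fprod_nonneg α w hwpos n t) (le_max_right _ _)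
  · obtain ⟨k, hk⟩ := ho
    have hn2 : 2 * (n / 2) = 2 * k := by omega
    rw [hn2, hk]
    have hstep : fprod α w (2 * k + 1) t
        = fprod α w (2 * k) t * (w ((⇑α.symm)^[2 * k + 1] t))⁻¹ := by
      unfold fprod
      rw [Finset.prod_range_succ]
    rw [hstep, mul_comm (max M' 1)]
    apply mul_le_mul le_rfl (le_trans (hM' _) (le_max_left _ _))
      (inv_nonneg.2 (hwpos _).le) (fprod_nonneg α w hwpos _ t)

end pointwise

end S19

theorem stmt19 {Ω : Type} [TopologicalSpace Ω] [LocallyCompactSpace Ω] [T2Space Ω]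
    [MeasurableSpace Ω] [BorelSpace Ω]
    (α : Homeomorph Ω Ω) (w : Ω → ℝ) (hw : Continuous w) (hwpos : ∀ x, 0 < w x)
    (hwbdd : BddAbove (Set.range w)) (hwinvbdd : BddAbove (Set.range fun x => (w x)⁻¹))
    (Tstar Sstar : SignedMeasure Ω → SignedMeasure Ω)
    (hTstar : ∀ (μ : SignedMeasure Ω) (E : Set Ω), MeasurableSet E →
      Tstar μ E = signedSetIntegral (μ.map ⇑α) E (fun x => w (α.symm x)))
    (hSstar : ∀ (μ : SignedMeasure Ω) (E : Set Ω), MeasurableSet E →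
      Sstar μ E = signedSetIntegral (μ.map ⇑α.symm) E (fun t => (w t)⁻¹))
    (ha : ∀ K : Set Ω, IsCompact K →
      Tendsto
        (fun n : ℕ =>
          sSup ((fun t => ∏ j ∈ Finset.range n, w ((⇑α)^[j] t)) '' K) *
            sSup ((fun t => ∏ j ∈ Finset.range n, (w ((⇑α.symm)^[j + 1] t))⁻¹) '' K))
        atTop (nhds 0))
    (hb : ∀ K : Set Ω, IsCompact K →
      Tendsto
        (fun n : ℕ =>
          sSup ((fun t => ∏ j ∈ Finset.range (2 * n), (w ((⇑α.symm)^[j + 1] t))⁻¹) '' K))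
        atTop (nhds 0)) :
    ∀ U₁ U₂ : Set (SignedMeasure Ω), TVOpen U₁ → U₁.Nonempty → TVOpen U₂ → U₂.Nonempty →
      ∃ (N : ℕ) (lam : ℕ → ℝ), ∀ n : ℕ, N ≤ n →
        0 < lam n ∧ ∃ μ ∈ U₁,
          lam n • ((2 : ℝ)⁻¹ • (Tstar^[n] μ + Sstar^[n] μ)) ∈ U₂ := by
  intro U₁ U₂ hU₁ hne₁ hU₂ hne₂
  obtain ⟨μ₁, hμ₁⟩ := hne₁
  obtain ⟨ν₀, hν₀⟩ := hne₂
  obtain ⟨ε₁, hε₁, hball₁⟩ := hU₁ μ₁ hμ₁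
  obtain ⟨ε₂, hε₂, hball₂⟩ := hU₂ ν₀ hν₀
  obtain ⟨M, hMub⟩ := hwbdd
  obtain ⟨M', hM'ub⟩ := hwinvbdd
  have hM : ∀ x, w x ≤ M := fun x => hMub ⟨x, rfl⟩
  have hM' : ∀ x, (w x)⁻¹ ≤ M' := fun x => hM'ub ⟨x, rfl⟩
  set p : Measure Ω := μ₁.toJordanDecomposition.posPart with hp_def
  set q : Measure Ω := μ₁.toJordanDecomposition.negPart with hq_def
  set p' : Measure Ω := ν₀.toJordanDecomposition.posPart with hp'_def
  set q' : Measure Ω := ν₀.toJordanDecomposition.negPart with hq'_def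
  have hμ₁SM : μ₁ = S19.SM p q := by
    rw [S19.SM_def]
    exact (μ₁.toSignedMeasure_toJordanDecomposition).symm
  have hν₀SM : ν₀ = S19.SM p' q' := by
    rw [S19.SM_def]
    exact (ν₀.toSignedMeasure_toJordanDecomposition).symm
  set μbar : Measure Ω := p + q with hμbar_def
  set νbar : Measure Ω := p' + q' with hνbar_def
  set Mμ : ℝ := (μbar Set.univ).toReal with hMμ_def
  set Mν : ℝ := (νbar Set.univ).toReal with hMν_def
  have hFm : ∀ n, Measurable (S19.Fprod α w n) :=
    fun n => (S19.Fprod_continuous α w hw n).measurable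
  have hfm : ∀ n, Measurable (S19.fprod α w n) :=
    fun n => (S19.fprod_continuous α w hw hwpos n).measurable
  have hf2m : ∀ n : ℕ, Measurable (fun x => S19.fprod α w (2 * n) x) := fun n => hfm (2 * n)
  have hpt_pair := S19.pair_limit α w hwpos ha
  have hpt_f := S19.fpoint_limit α w hwpos M' hM' hb
  have hpt_f2 : ∀ x, Tendsto (fun n => S19.fprod α w (2 * n) x) atTop (nhds 0) := fun x =>
    (hpt_f x).comp (tendsto_atTop_atTop.mpr fun b => ⟨b, fun n hn => by omega⟩)
  have hinm_ν : ∀ θ : ℝ, 0 < θ →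
      Tendsto (fun n => νbar {x | θ < S19.fprod α w n x}) atTop (nhds 0) :=
    fun θ hθ => S19.meas_gt_tendsto νbar hfm (fun n x => S19.fprod_nonneg α w hwpos n x) hpt_f hθ
  have hinm_ν2 : ∀ θ : ℝ, 0 < θ →
      Tendsto (fun n => νbar {x | θ < S19.fprod α w (2 * n) x}) atTop (nhds 0) :=
    fun θ hθ => S19.meas_gt_tendsto νbar hf2m (fun n x => S19.fprod_nonneg α w hwpos (2*n) x)
      hpt_f2 hθ
  have hinm_μ : ∀ θ : ℝ, 0 < θ →
      Tendsto (fun n => μbar {x | θ < S19.fprod α w n x}) atTop (nhds 0) :=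
    fun θ hθ => S19.meas_gt_tendsto μbar hfm (fun n x => S19.fprod_nonneg α w hwpos n x) hpt_f hθ
  set e1 : ENNReal := ENNReal.ofReal (ε₁ / 8) with he1_def
  set e2 : ENNReal := ENNReal.ofReal (ε₂ / 12) with he2_def
  have he1 : 0 < e1 := ENNReal.ofReal_pos.mpr (by linarith)
  have he2 : 0 < e2 := ENNReal.ofReal_pos.mpr (by linarith)
  obtain ⟨R, hR0, hRtail, hRq⟩ := S19.quantile μbar hFm e1 he1
  obtain ⟨θ, hθ0, hθtail, hθq⟩ := S19.quantile νbar hfm e2 he2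
  obtain ⟨κ, hκ0, hκtail, hκq⟩ := S19.quantile νbar hf2m e2 he2
  have hθ_to0 := S19.quantile_tendsto_zero νbar e2 he2 θ hθ0 hθq hinm_ν
  have hκ_to0 := S19.quantile_tendsto_zero νbar e2 he2 κ hκ0 hκq hinm_ν2
  have hRθ := S19.key_product μbar νbar _ _ hFm hfm hpt_pair e1 e2 he1 he2 R θ hR0 hθ0 hRq hθq
  set θ' : ℕ → ℝ := fun n => θ n + 1 / (((n : ℝ) + 1) * (1 + R n)) with hθ'_def
  set κ' : ℕ → ℝ := fun n => κ n + 1 / ((n : ℝ) + 1) with hκ'_def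
  have hθ'pos : ∀ n : ℕ, 0 < 1 / (((n : ℝ) + 1) * (1 + R n)) := by
    intro n
    have h1 : (0:ℝ) < (n : ℝ) + 1 := by positivity
    have h2 : (0:ℝ) < 1 + R n := by linarith [hR0 n]
    positivity
  have hθ'0 : ∀ n, 0 ≤ θ' n := fun n => by
    have := hθ'pos n; have := hθ0 n; simp only [hθ'_def]; linarith
  have hκ'0 : ∀ n, 0 ≤ κ' n := fun n => by
    have : (0:ℝ) < 1 / ((n:ℝ)+1) := by positivity
    have := hκ0 n; simp only [hκ'_def]; linarith
  set A : ℕ → Set Ω := fun n =>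
    {x | S19.fprod α w n x ≤ θ' n} ∩ {x | S19.fprod α w (2 * n) x ≤ κ' n} with hA_def
  set B : ℕ → Set Ω := fun n =>
    {x | S19.Fprod α w n x ≤ R n + 1} ∩ {x | S19.fprod α w n x ≤ 1} with hB_def
  have hAme : ∀ n, MeasurableSet (A n) := fun n =>
    (measurableSet_le (hfm n) measurable_const).inter
      (measurableSet_le (hf2m n) measurable_const)
  have hBme : ∀ n, MeasurableSet (B n) := fun n =>
    (measurableSet_le (hFm n) measurable_const).inter
      (measurableSet_le (hfm n) measurable_const)
  -- tail bounds
  have hcompl1 : ∀ n, {x | S19.fprod α w n x ≤ θ' n}ᶜ = {x | θ' n < S19.fprod α w n x} := by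
    intro n; ext x; simp [not_le]
  have hcompl2 : ∀ n, {x | S19.fprod α w (2*n) x ≤ κ' n}ᶜ = {x | κ' n < S19.fprod α w (2*n) x} := by
    intro n; ext x; simp [not_le]
  have hνA : ∀ n, νbar ((A n)ᶜ) ≤ e2 + e2 := by
    intro n
    have h1 : νbar ((A n)ᶜ) ≤ νbar ({x | S19.fprod α w n x ≤ θ' n}ᶜ)
        + νbar ({x | S19.fprod α w (2*n) x ≤ κ' n}ᶜ) := by
      simp only [hA_def, Set.compl_inter]
      exact measure_union_le _ _
    have h2 : νbar ({x | S19.fprod α w n x ≤ θ' n}ᶜ) ≤ e2 := by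
      rw [hcompl1 n]
      have h := hθtail n (1 / (((n : ℝ) + 1) * (1 + R n))) (hθ'pos n)
      simpa [hθ'_def] using h
    have h3 : νbar ({x | S19.fprod α w (2*n) x ≤ κ' n}ᶜ) ≤ e2 := by
      rw [hcompl2 n]
      have h := hκtail n (1 / ((n : ℝ) + 1)) (by positivity)
      simpa [hκ'_def] using h
    exact le_trans h1 (add_le_add h2 h3)
  have hμBev : ∀ᶠ n in atTop, μbar ((B n)ᶜ) ≤ e1 + e1 := by
    have hev := (hinm_μ 1 one_pos).eventually (Iio_mem_nhds he1)
    filter_upwards [hev] with n hn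
    have h1 : μbar ((B n)ᶜ) ≤ μbar ({x | S19.Fprod α w n x ≤ R n + 1}ᶜ)
        + μbar ({x | S19.fprod α w n x ≤ 1}ᶜ) := by
      simp only [hB_def, Set.compl_inter]
      exact measure_union_le _ _
    have h2 : μbar ({x | S19.Fprod α w n x ≤ R n + 1}ᶜ) ≤ e1 := by
      have hceq : {x | S19.Fprod α w n x ≤ R n + 1}ᶜ = {x | R n + 1 < S19.Fprod α w n x} := by
        ext x; simp [not_le]
      rw [hceq]
      exact hRtail n 1 one_pos
    have h3 : μbar ({x | S19.fprod α w n x ≤ 1}ᶜ) ≤ e1 := by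
      have hceq : {x | S19.fprod α w n x ≤ (1:ℝ)}ᶜ = {x | (1:ℝ) < S19.fprod α w n x} := by
        ext x; simp [not_le]
      rw [hceq]
      exact hn.le
    exact le_trans h1 (add_le_add h2 h3)
  -- scalar sequences
  set cE : ℕ → ENNReal := fun n =>
    ((S19.Phi α w)^[n] (p'.restrict (A n))) Set.univ
      + ((S19.Phi α w)^[n] (q'.restrict (A n))) Set.univ with hcE_def
  set aE : ℕ → ENNReal := fun n =>
    ((S19.Psi α w)^[n] (p.restrict (B n))) Set.univ
      + ((S19.Psi α w)^[n] (q.restrict (B n))) Set.univ with haE_def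
  set bE : ℕ → ENNReal := fun n =>
    ((S19.Phi α w)^[n] (p.restrict (B n))) Set.univ
      + ((S19.Phi α w)^[n] (q.restrict (B n))) Set.univ with hbE_def
  set dE : ℕ → ENNReal := fun n =>
    ((S19.Phi α w)^[n + n] (p'.restrict (A n))) Set.univ
      + ((S19.Phi α w)^[n + n] (q'.restrict (A n))) Set.univ with hdE_def
  set c : ℕ → ℝ := fun n => (cE n).toReal with hc_def
  set a : ℕ → ℝ := fun n => (aE n).toReal with ha_def
  set b : ℕ → ℝ := fun n => (bE n).toReal with hb_def
  set d : ℕ → ℝ := fun n => (dE n).toReal with hd_def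
  have hcE_ne : ∀ n, cE n ≠ ⊤ := by
    intro n
    haveI := S19.fin_Phi_iterate α w hw hwpos M' hM' n (p'.restrict (A n))
    haveI := S19.fin_Phi_iterate α w hw hwpos M' hM' n (q'.restrict (A n))
    simp only [hcE_def]
    finiteness
  have haE_ne : ∀ n, aE n ≠ ⊤ := by
    intro n
    haveI := S19.fin_Psi_iterate α w hw hwpos M hM n (p.restrict (B n))
    haveI := S19.fin_Psi_iterate α w hw hwpos M hM n (q.restrict (B n))
    simp only [haE_def]
    finiteness
  have hbE_ne : ∀ n, bE n ≠ ⊤ := by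
    intro n
    haveI := S19.fin_Phi_iterate α w hw hwpos M' hM' n (p.restrict (B n))
    haveI := S19.fin_Phi_iterate α w hw hwpos M' hM' n (q.restrict (B n))
    simp only [hbE_def]
    finiteness
  have hdE_ne : ∀ n, dE n ≠ ⊤ := by
    intro n
    haveI := S19.fin_Phi_iterate α w hw hwpos M' hM' (n+n) (p'.restrict (A n))
    haveI := S19.fin_Phi_iterate α w hw hwpos M' hM' (n+n) (q'.restrict (A n))
    simp only [hdE_def]
    finiteness
  have hc0 : ∀ n, 0 ≤ c n := fun n => ENNReal.toReal_nonneg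
  have ha0 : ∀ n, 0 ≤ a n := fun n => ENNReal.toReal_nonneg
  have hb0 : ∀ n, 0 ≤ b n := fun n => ENNReal.toReal_nonneg
  have hd0 : ∀ n, 0 ≤ d n := fun n => ENNReal.toReal_nonneg
  -- mass bounds
  have hc_le : ∀ n, c n ≤ θ' n * Mν := by
    intro n
    have h1 : cE n ≤ ENNReal.ofReal (θ' n) * νbar Set.univ := by
      have hp1 : ((S19.Phi α w)^[n] (p'.restrict (A n))) Set.univ
          ≤ ENNReal.ofReal (θ' n) * p' Set.univ := by
        rw [S19.Phi_iterate_univ α w hw hwpos]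
        exact S19.restrict_mass_le p' (hAme n) (hθ'0 n) (fun x hx => hx.1)
      have hq1 : ((S19.Phi α w)^[n] (q'.restrict (A n))) Set.univ
          ≤ ENNReal.ofReal (θ' n) * q' Set.univ := by
        rw [S19.Phi_iterate_univ α w hw hwpos]
        exact S19.restrict_mass_le q' (hAme n) (hθ'0 n) (fun x hx => hx.1)
      calc cE n ≤ ENNReal.ofReal (θ' n) * p' Set.univ + ENNReal.ofReal (θ' n) * q' Set.univ :=
            add_le_add hp1 hq1
      _ = ENNReal.ofReal (θ' n) * νbar Set.univ := by
          rw [← mul_add, hνbar_def, Measure.add_apply]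
    have h2 := ENNReal.toReal_mono (by finiteness) h1
    rw [ENNReal.toReal_mul, ENNReal.toReal_ofReal (hθ'0 n)] at h2
    exact h2
  have ha_le : ∀ n, a n ≤ (R n + 1) * Mμ := by
    intro n
    have h1 : aE n ≤ ENNReal.ofReal (R n + 1) * μbar Set.univ := by
      have hp1 : ((S19.Psi α w)^[n] (p.restrict (B n))) Set.univ
          ≤ ENNReal.ofReal (R n + 1) * p Set.univ := by
        rw [S19.Psi_iterate_univ α w hw hwpos]
        exact S19.restrict_mass_le p (hBme n) (by linarith [hR0 n]) (fun x hx => hx.1)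
      have hq1 : ((S19.Psi α w)^[n] (q.restrict (B n))) Set.univ
          ≤ ENNReal.ofReal (R n + 1) * q Set.univ := by
        rw [S19.Psi_iterate_univ α w hw hwpos]
        exact S19.restrict_mass_le q (hBme n) (by linarith [hR0 n]) (fun x hx => hx.1)
      calc aE n ≤ ENNReal.ofReal (R n + 1) * p Set.univ + ENNReal.ofReal (R n + 1) * q Set.univ :=
            add_le_add hp1 hq1
      _ = ENNReal.ofReal (R n + 1) * μbar Set.univ := by
          rw [← mul_add, hμbar_def, Measure.add_apply]
    have h2 := ENNReal.toReal_mono (by finiteness) h1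
    rw [ENNReal.toReal_mul, ENNReal.toReal_ofReal (by linarith [hR0 n] : (0:ℝ) ≤ R n + 1)] at h2
    exact h2
  have hb_le : ∀ n, b n ≤ Mμ := by
    intro n
    have h1 : bE n ≤ ENNReal.ofReal 1 * μbar Set.univ := by
      have hp1 : ((S19.Phi α w)^[n] (p.restrict (B n))) Set.univ
          ≤ ENNReal.ofReal 1 * p Set.univ := by
        rw [S19.Phi_iterate_univ α w hw hwpos]
        exact S19.restrict_mass_le p (hBme n) one_pos.le (fun x hx => hx.2)
      have hq1 : ((S19.Phi α w)^[n] (q.restrict (B n))) Set.univ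
          ≤ ENNReal.ofReal 1 * q Set.univ := by
        rw [S19.Phi_iterate_univ α w hw hwpos]
        exact S19.restrict_mass_le q (hBme n) one_pos.le (fun x hx => hx.2)
      calc bE n ≤ ENNReal.ofReal 1 * p Set.univ + ENNReal.ofReal 1 * q Set.univ :=
            add_le_add hp1 hq1
      _ = ENNReal.ofReal 1 * μbar Set.univ := by
          rw [← mul_add, hμbar_def, Measure.add_apply]
    have h2 := ENNReal.toReal_mono (by finiteness) h1
    rw [ENNReal.toReal_mul, ENNReal.toReal_ofReal one_pos.le, one_mul] at h2
    exact h2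
  have hd_le : ∀ n, d n ≤ κ' n * Mν := by
    intro n
    have h2n : ∀ x ∈ A n, S19.fprod α w (n + n) x ≤ κ' n := by
      intro x hx
      have := hx.2
      rwa [show 2 * n = n + n by ring] at this
    have h1 : dE n ≤ ENNReal.ofReal (κ' n) * νbar Set.univ := by
      have hp1 : ((S19.Phi α w)^[n+n] (p'.restrict (A n))) Set.univ
          ≤ ENNReal.ofReal (κ' n) * p' Set.univ := by
        rw [S19.Phi_iterate_univ α w hw hwpos]
        exact S19.restrict_mass_le p' (hAme n) (hκ'0 n) h2n
      have hq1 : ((S19.Phi α w)^[n+n] (q'.restrict (A n))) Set.univ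
          ≤ ENNReal.ofReal (κ' n) * q' Set.univ := by
        rw [S19.Phi_iterate_univ α w hw hwpos]
        exact S19.restrict_mass_le q' (hAme n) (hκ'0 n) h2n
      calc dE n ≤ ENNReal.ofReal (κ' n) * p' Set.univ + ENNReal.ofReal (κ' n) * q' Set.univ :=
            add_le_add hp1 hq1
      _ = ENNReal.ofReal (κ' n) * νbar Set.univ := by
          rw [← mul_add, hνbar_def, Measure.add_apply]
    have h2 := ENNReal.toReal_mono (by finiteness) h1
    rw [ENNReal.toReal_mul, ENNReal.toReal_ofReal (hκ'0 n)] at h2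
    exact h2
  -- lambda
  set lam : ℕ → ℝ := fun n => 4 * c n / ε₁ + (ε₂ / 6) / (1 + a n + b n) with hlam_def
  have hlam_pos : ∀ n, 0 < lam n := by
    intro n
    have h1 : 0 ≤ 4 * c n / ε₁ := by positivity
    have h2 : (0:ℝ) < 1 + a n + b n := by linarith [ha0 n, hb0 n]
    have h3 : 0 < (ε₂ / 6) / (1 + a n + b n) := by positivity
    simp only [hlam_def]; linarith
  have hlam_c : ∀ n, 2 / lam n * c n ≤ ε₁ / 2 := by
    intro n
    have h2 : (0:ℝ) < 1 + a n + b n := by linarith [ha0 n, hb0 n]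
    have hle : 4 * c n / ε₁ ≤ lam n := by
      simp only [hlam_def]
      have : 0 < (ε₂ / 6) / (1 + a n + b n) := by positivity
      linarith
    -- 2/lam * c ≤ ε₁/2  ⟺  4 c ≤ lam ε₁
    rw [div_mul_eq_mul_div, div_le_div_iff₀ (hlam_pos n) (by norm_num : (0:ℝ) < 2)]
    have h4 : 4 * c n ≤ lam n * ε₁ := by
      rw [div_le_iff₀ hε₁] at hle
      linarith
    linarith
  -- eventual bounds
  have hone : Tendsto (fun n : ℕ => 1 / ((n:ℝ) + 1)) atTop (nhds 0) :=
    tendsto_one_div_add_atTop_nhds_zero_nat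
  have hMμ0 : 0 ≤ Mμ := ENNReal.toReal_nonneg
  have hMν0 : 0 ≤ Mν := ENNReal.toReal_nonneg
  have hEv2 : ∀ᶠ n in atTop, 2 * c n * (a n + b n) / ε₁ < ε₂ / 12 := by
    have hub : ∀ n, 2 * c n * (a n + b n) / ε₁
        ≤ (θ n * R n + 2 * θ n + 2 * (1 / ((n:ℝ) + 1))) * (Mν * Mμ) * (2 / ε₁) := by
      intro n
      have hpos1 : (0:ℝ) < (n:ℝ) + 1 := by positivity
      have hpos2 : (0:ℝ) < 1 + R n := by linarith [hR0 n]
      have k1 : c n * (a n + b n) ≤ (θ' n * Mν) * ((R n + 1) * Mμ + Mμ) := by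
        apply mul_le_mul (hc_le n) (by linarith [ha_le n, hb_le n])
          (by linarith [ha0 n, hb0 n]) (mul_nonneg (hθ'0 n) hMν0)
      have hη : 1 / (((n:ℝ) + 1) * (1 + R n)) * (R n + 2) ≤ 2 * (1 / ((n:ℝ) + 1)) := by
        rw [div_mul_eq_mul_div, one_mul, mul_one_div, div_le_div_iff₀ (by positivity) hpos1]
        nlinarith [hR0 n]
      have k3 : θ' n * (R n + 2) ≤ θ n * R n + 2 * θ n + 2 * (1 / ((n:ℝ) + 1)) := by
        have expand : θ' n * (R n + 2)
            = θ n * R n + 2 * θ n + 1 / (((n:ℝ) + 1) * (1 + R n)) * (R n + 2) := by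
          simp only [hθ'_def]; ring
        rw [expand]
        linarith [hη]
      have k2 : (θ' n * Mν) * ((R n + 1) * Mμ + Mμ) = (θ' n * (R n + 2)) * (Mν * Mμ) := by ring
      have k4 : c n * (a n + b n)
          ≤ (θ n * R n + 2 * θ n + 2 * (1 / ((n:ℝ) + 1))) * (Mν * Mμ) := by
        rw [k2] at k1
        exact le_trans k1 (mul_le_mul_of_nonneg_right k3 (mul_nonneg hMν0 hMμ0))
      have k5 : 2 * c n * (a n + b n) / ε₁ = (c n * (a n + b n)) * (2 / ε₁) := by ring
      rw [k5]
      exact mul_le_mul_of_nonneg_right k4 (by positivity)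
    have htend : Tendsto (fun n => (θ n * R n + 2 * θ n + 2 * (1 / ((n:ℝ) + 1)))
        * (Mν * Mμ) * (2 / ε₁)) atTop (nhds 0) := by
      have h1 : Tendsto (fun n => θ n * R n + 2 * θ n + 2 * (1 / ((n:ℝ) + 1))) atTop (nhds 0) := by
        have hθR : Tendsto (fun n => θ n * R n) atTop (nhds 0) := by
          have := hRθ
          simpa [mul_comm] using this
        have := (hθR.add (hθ_to0.const_mul 2)).add (hone.const_mul 2)
        simpa using this
      have := (h1.mul_const (Mν * Mμ)).mul_const (2 / ε₁)
      simpa using this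
    have hev := htend.eventually (Iio_mem_nhds (by positivity : (0:ℝ) < ε₂ / 12))
    filter_upwards [hev] with n hn
    exact lt_of_le_of_lt (hub n) hn
  have hEv3 : ∀ᶠ n in atTop, d n < ε₂ / 6 := by
    have hκ'tend : Tendsto (fun n => κ' n * Mν) atTop (nhds 0) := by
      have h2 := (hκ_to0.add hone).mul_const Mν
      simp only [add_zero, zero_add, zero_mul] at h2
      have heq : (fun n => κ' n * Mν) = fun n : ℕ => (κ n + 1 / ((n:ℝ) + 1)) * Mν := by
        funext n; rw [hκ'_def]
      rw [heq]
      exact h2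
    have hev := hκ'tend.eventually (Iio_mem_nhds (by positivity : (0:ℝ) < ε₂ / 6))
    filter_upwards [hev] with n hn
    exact lt_of_le_of_lt (hd_le n) hn
  obtain ⟨N, hN⟩ := eventually_atTop.mp (hμBev.and (hEv2.and hEv3))
  refine ⟨N, lam, fun n hn => ⟨hlam_pos n, ?_⟩⟩
  obtain ⟨hB_n, hE2_n, hE3_n⟩ := hN n hn
  -- per-n construction
  have hAn := hAme n
  have hBn := hBme n
  set Pp : Measure Ω := p.restrict (B n) with hPp_def
  set Pq : Measure Ω := q.restrict (B n) with hPq_def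
  set Ppc : Measure Ω := p.restrict ((B n)ᶜ) with hPpc_def
  set Pqc : Measure Ω := q.restrict ((B n)ᶜ) with hPqc_def
  set np' : Measure Ω := p'.restrict (A n) with hnp'_def
  set nq' : Measure Ω := q'.restrict (A n) with hnq'_def
  set np'c : Measure Ω := p'.restrict ((A n)ᶜ) with hnp'c_def
  set nq'c : Measure Ω := q'.restrict ((A n)ᶜ) with hnq'c_def
  have hpsum : Pp + Ppc = p := Measure.restrict_add_restrict_compl hBn
  have hqsum : Pq + Pqc = q := Measure.restrict_add_restrict_compl hBn
  have hp'sum : np' + np'c = p' := Measure.restrict_add_restrict_compl hAn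
  have hq'sum : nq' + nq'c = q' := Measure.restrict_add_restrict_compl hAn
  haveI iPhinp' : IsFiniteMeasure ((S19.Phi α w)^[n] np') :=
    S19.fin_Phi_iterate α w hw hwpos M' hM' n np'
  haveI iPhinq' : IsFiniteMeasure ((S19.Phi α w)^[n] nq') :=
    S19.fin_Phi_iterate α w hw hwpos M' hM' n nq'
  haveI iPsiPp : IsFiniteMeasure ((S19.Psi α w)^[n] Pp) :=
    S19.fin_Psi_iterate α w hw hwpos M hM n Pp
  haveI iPsiPq : IsFiniteMeasure ((S19.Psi α w)^[n] Pq) :=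
    S19.fin_Psi_iterate α w hw hwpos M hM n Pq
  haveI iPhiPp : IsFiniteMeasure ((S19.Phi α w)^[n] Pp) :=
    S19.fin_Phi_iterate α w hw hwpos M' hM' n Pp
  haveI iPhiPq : IsFiniteMeasure ((S19.Phi α w)^[n] Pq) :=
    S19.fin_Phi_iterate α w hw hwpos M' hM' n Pq
  haveI iPhi2np' : IsFiniteMeasure ((S19.Phi α w)^[n + n] np') :=
    S19.fin_Phi_iterate α w hw hwpos M' hM' (n + n) np'
  haveI iPhi2nq' : IsFiniteMeasure ((S19.Phi α w)^[n + n] nq') :=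
    S19.fin_Phi_iterate α w hw hwpos M' hM' (n + n) nq'
  haveI ir1 : IsFiniteMeasure (ENNReal.ofReal (2 / lam n) • (S19.Phi α w)^[n] np') :=
    S19.fin_smul _ _
  haveI ir2 : IsFiniteMeasure (ENNReal.ofReal (2 / lam n) • (S19.Phi α w)^[n] nq') :=
    S19.fin_smul _ _
  haveI ir3 : IsFiniteMeasure (ENNReal.ofReal (2 / lam n) • (S19.Phi α w)^[n + n] np') :=
    S19.fin_smul _ _
  haveI ir4 : IsFiniteMeasure (ENNReal.ofReal (2 / lam n) • (S19.Phi α w)^[n + n] nq') :=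
    S19.fin_smul _ _
  haveI ir5 : IsFiniteMeasure (ENNReal.ofReal (2 / lam n) • np') := S19.fin_smul _ _
  haveI ir6 : IsFiniteMeasure (ENNReal.ofReal (2 / lam n) • nq') := S19.fin_smul _ _
  haveI iL1 : IsFiniteMeasure (ENNReal.ofReal (lam n * 2⁻¹) • (S19.Psi α w)^[n] Pp) :=
    S19.fin_smul _ _
  haveI iL2 : IsFiniteMeasure (ENNReal.ofReal (lam n * 2⁻¹) • (S19.Psi α w)^[n] Pq) :=
    S19.fin_smul _ _
  haveI iL3 : IsFiniteMeasure (ENNReal.ofReal (lam n * 2⁻¹) • (S19.Phi α w)^[n] Pp) :=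
    S19.fin_smul _ _
  haveI iL4 : IsFiniteMeasure (ENNReal.ofReal (lam n * 2⁻¹) • (S19.Phi α w)^[n] Pq) :=
    S19.fin_smul _ _
  set Pn : Measure Ω := Pp + ENNReal.ofReal (2 / lam n) • (S19.Phi α w)^[n] np' with hPn_def
  set Qn : Measure Ω := Pq + ENNReal.ofReal (2 / lam n) • (S19.Phi α w)^[n] nq' with hQn_def
  -- basic real facts
  have hlamn := hlam_pos n
  have hr0 : (0:ℝ) ≤ 2 / lam n := by positivity
  have hL0 : (0:ℝ) ≤ lam n * 2⁻¹ := by positivity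
  have hceq : c n = (((S19.Phi α w)^[n] np') Set.univ).toReal
      + (((S19.Phi α w)^[n] nq') Set.univ).toReal := by
    simp only [hc_def, hcE_def, hnp'_def, hnq'_def,
      ENNReal.toReal_add (measure_ne_top _ _) (measure_ne_top _ _)]
  have haeq : a n = (((S19.Psi α w)^[n] Pp) Set.univ).toReal
      + (((S19.Psi α w)^[n] Pq) Set.univ).toReal := by
    simp only [ha_def, haE_def, hPp_def, hPq_def,
      ENNReal.toReal_add (measure_ne_top _ _) (measure_ne_top _ _)]
  have hbeq : b n = (((S19.Phi α w)^[n] Pp) Set.univ).toReal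
      + (((S19.Phi α w)^[n] Pq) Set.univ).toReal := by
    simp only [hb_def, hbE_def, hPp_def, hPq_def,
      ENNReal.toReal_add (measure_ne_top _ _) (measure_ne_top _ _)]
  have hdeq : d n = (((S19.Phi α w)^[n + n] np') Set.univ).toReal
      + (((S19.Phi α w)^[n + n] nq') Set.univ).toReal := by
    simp only [hd_def, hdE_def, hnp'_def, hnq'_def,
      ENNReal.toReal_add (measure_ne_top _ _) (measure_ne_top _ _)]
  refine ⟨S19.SM Pn Qn, ?_, ?_⟩
  · -- μn ∈ U₁
    apply hball₁
    have hdiff : S19.SM Pn Qn - μ₁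
        = S19.SM (ENNReal.ofReal (2 / lam n) • (S19.Phi α w)^[n] np' + Pqc)
            (ENNReal.ofReal (2 / lam n) • (S19.Phi α w)^[n] nq' + Ppc) := by
      rw [hμ₁SM, S19.SM_sub]
      apply S19.SM_congr
      rw [hPn_def, hQn_def, ← hpsum, ← hqsum]
      abel
    apply S19.tv_bound _ _ _ hdiff
    have hX1 : ((ENNReal.ofReal (2 / lam n) • (S19.Phi α w)^[n] np' + Pqc) Set.univ).toReal
        = 2 / lam n * (((S19.Phi α w)^[n] np') Set.univ).toReal + (q ((B n)ᶜ)).toReal := by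
      rw [Measure.add_apply, ENNReal.toReal_add (measure_ne_top _ _) (measure_ne_top _ _),
        Measure.smul_apply, smul_eq_mul, ENNReal.toReal_mul, ENNReal.toReal_ofReal hr0,
        hPqc_def, Measure.restrict_apply_univ]
    have hY1 : ((ENNReal.ofReal (2 / lam n) • (S19.Phi α w)^[n] nq' + Ppc) Set.univ).toReal
        = 2 / lam n * (((S19.Phi α w)^[n] nq') Set.univ).toReal + (p ((B n)ᶜ)).toReal := by
      rw [Measure.add_apply, ENNReal.toReal_add (measure_ne_top _ _) (measure_ne_top _ _),
        Measure.smul_apply, smul_eq_mul, ENNReal.toReal_mul, ENNReal.toReal_ofReal hr0,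
        hPpc_def, Measure.restrict_apply_univ]
    rw [hX1, hY1]
    have htail : (p ((B n)ᶜ)).toReal + (q ((B n)ᶜ)).toReal ≤ ε₁ / 4 := by
      have h1 := ENNReal.toReal_mono (by finiteness) hB_n
      have h2 : (μbar ((B n)ᶜ)).toReal = (p ((B n)ᶜ)).toReal + (q ((B n)ᶜ)).toReal := by
        rw [hμbar_def, Measure.add_apply,
          ENNReal.toReal_add (measure_ne_top _ _) (measure_ne_top _ _)]
      have h3 : ((e1 + e1 : ENNReal)).toReal = ε₁ / 8 + ε₁ / 8 := by
        rw [ENNReal.toReal_add (by finiteness) (by finiteness), he1_def,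
          ENNReal.toReal_ofReal (by linarith)]
      rw [h2, h3] at h1
      linarith
    have hmain : 2 / lam n * (((S19.Phi α w)^[n] np') Set.univ).toReal
        + 2 / lam n * (((S19.Phi α w)^[n] nq') Set.univ).toReal ≤ ε₁ / 2 := by
      have h4 : 2 / lam n * (((S19.Phi α w)^[n] np') Set.univ).toReal
          + 2 / lam n * (((S19.Phi α w)^[n] nq') Set.univ).toReal = 2 / lam n * c n := by
        rw [hceq]; ring
      rw [h4]
      exact hlam_c n
    linarith
  · -- image in U₂
    apply hball₂
    have hT := S19.Tstar_iter_SM α w hw hwpos Tstar hTstar M hM Pn Qn n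
    have hS := S19.Sstar_iter_SM α w hw hwpos Sstar hSstar M' hM' Pn Qn n
    have hTexpP : (S19.Psi α w)^[n] Pn
        = (S19.Psi α w)^[n] Pp + ENNReal.ofReal (2 / lam n) • np' := by
      rw [hPn_def, S19.Psi_iterate_add, S19.Psi_iterate_smul,
        S19.Psi_Phi_iterate α w hw hwpos n np']
    have hTexpQ : (S19.Psi α w)^[n] Qn
        = (S19.Psi α w)^[n] Pq + ENNReal.ofReal (2 / lam n) • nq' := by
      rw [hQn_def, S19.Psi_iterate_add, S19.Psi_iterate_smul,
        S19.Psi_Phi_iterate α w hw hwpos n nq']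
    have hSexpP : (S19.Phi α w)^[n] Pn
        = (S19.Phi α w)^[n] Pp + ENNReal.ofReal (2 / lam n) • (S19.Phi α w)^[n + n] np' := by
      rw [hPn_def, S19.Phi_iterate_add, S19.Phi_iterate_smul,
        ← Function.iterate_add_apply]
    have hSexpQ : (S19.Phi α w)^[n] Qn
        = (S19.Phi α w)^[n] Pq + ENNReal.ofReal (2 / lam n) • (S19.Phi α w)^[n + n] nq' := by
      rw [hQn_def, S19.Phi_iterate_add, S19.Phi_iterate_smul,
        ← Function.iterate_add_apply]
    have hLr : ENNReal.ofReal (lam n * 2⁻¹) * ENNReal.ofReal (2 / lam n) = 1 := by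
      rw [← ENNReal.ofReal_mul hL0]
      have : lam n * 2⁻¹ * (2 / lam n) = 1 := by field_simp
      rw [this, ENNReal.ofReal_one]
    have hξeq : lam n • ((2:ℝ)⁻¹ • (Tstar^[n] (S19.SM Pn Qn) + Sstar^[n] (S19.SM Pn Qn)))
        = S19.SM
          (ENNReal.ofReal (lam n * 2⁻¹) • (S19.Psi α w)^[n] Pp + np'
            + (ENNReal.ofReal (lam n * 2⁻¹) • (S19.Phi α w)^[n] Pp
              + (S19.Phi α w)^[n + n] np'))
          (ENNReal.ofReal (lam n * 2⁻¹) • (S19.Psi α w)^[n] Pq + nq'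
            + (ENNReal.ofReal (lam n * 2⁻¹) • (S19.Phi α w)^[n] Pq
              + (S19.Phi α w)^[n + n] nq')) := by
      rw [hT, hS, hTexpP, hTexpQ, hSexpP, hSexpQ, S19.SM_add, smul_smul,
        S19.SM_smul _ _ (lam n * 2⁻¹) hL0]
      congr 1
      · rw [smul_add, smul_add, smul_add, smul_smul, smul_smul, hLr, one_smul, one_smul]
      · rw [smul_add, smul_add, smul_add, smul_smul, smul_smul, hLr, one_smul, one_smul]
    have hdiff2 : lam n • ((2:ℝ)⁻¹ • (Tstar^[n] (S19.SM Pn Qn) + Sstar^[n] (S19.SM Pn Qn))) - ν₀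
        = S19.SM
          (ENNReal.ofReal (lam n * 2⁻¹) • (S19.Psi α w)^[n] Pp
            + ENNReal.ofReal (lam n * 2⁻¹) • (S19.Phi α w)^[n] Pp
            + (S19.Phi α w)^[n + n] np' + nq'c)
          (ENNReal.ofReal (lam n * 2⁻¹) • (S19.Psi α w)^[n] Pq
            + ENNReal.ofReal (lam n * 2⁻¹) • (S19.Phi α w)^[n] Pq
            + (S19.Phi α w)^[n + n] nq' + np'c) := by
      rw [hξeq, hν₀SM, S19.SM_sub]
      apply S19.SM_congr
      rw [← hp'sum, ← hq'sum]
      abel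
    apply S19.tv_bound _ _ _ hdiff2
    have hXf : ((ENNReal.ofReal (lam n * 2⁻¹) • (S19.Psi α w)^[n] Pp
          + ENNReal.ofReal (lam n * 2⁻¹) • (S19.Phi α w)^[n] Pp
          + (S19.Phi α w)^[n + n] np' + nq'c) Set.univ).toReal
        = lam n * 2⁻¹ * (((S19.Psi α w)^[n] Pp) Set.univ).toReal
          + lam n * 2⁻¹ * (((S19.Phi α w)^[n] Pp) Set.univ).toReal
          + (((S19.Phi α w)^[n + n] np') Set.univ).toReal + (q' ((A n)ᶜ)).toReal := by
      rw [Measure.add_apply, Measure.add_apply, Measure.add_apply,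
        ENNReal.toReal_add (by finiteness) (measure_ne_top _ _),
        ENNReal.toReal_add (by finiteness) (measure_ne_top _ _),
        ENNReal.toReal_add (measure_ne_top _ _) (measure_ne_top _ _),
        Measure.smul_apply, Measure.smul_apply, smul_eq_mul, smul_eq_mul,
        ENNReal.toReal_mul, ENNReal.toReal_mul, ENNReal.toReal_ofReal hL0,
        hnq'c_def, Measure.restrict_apply_univ]
    have hYf : ((ENNReal.ofReal (lam n * 2⁻¹) • (S19.Psi α w)^[n] Pq
          + ENNReal.ofReal (lam n * 2⁻¹) • (S19.Phi α w)^[n] Pq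
          + (S19.Phi α w)^[n + n] nq' + np'c) Set.univ).toReal
        = lam n * 2⁻¹ * (((S19.Psi α w)^[n] Pq) Set.univ).toReal
          + lam n * 2⁻¹ * (((S19.Phi α w)^[n] Pq) Set.univ).toReal
          + (((S19.Phi α w)^[n + n] nq') Set.univ).toReal + (p' ((A n)ᶜ)).toReal := by
      rw [Measure.add_apply, Measure.add_apply, Measure.add_apply,
        ENNReal.toReal_add (by finiteness) (measure_ne_top _ _),
        ENNReal.toReal_add (by finiteness) (measure_ne_top _ _),
        ENNReal.toReal_add (measure_ne_top _ _) (measure_ne_top _ _),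
        Measure.smul_apply, Measure.smul_apply, smul_eq_mul, smul_eq_mul,
        ENNReal.toReal_mul, ENNReal.toReal_mul, ENNReal.toReal_ofReal hL0,
        hnp'c_def, Measure.restrict_apply_univ]
    rw [hXf, hYf]
    have htail2 : (q' ((A n)ᶜ)).toReal + (p' ((A n)ᶜ)).toReal ≤ ε₂ / 6 := by
      have h1 := ENNReal.toReal_mono (by finiteness) (hνA n)
      have h2 : (νbar ((A n)ᶜ)).toReal = (p' ((A n)ᶜ)).toReal + (q' ((A n)ᶜ)).toReal := by
        rw [hνbar_def, Measure.add_apply,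
          ENNReal.toReal_add (measure_ne_top _ _) (measure_ne_top _ _)]
      have h3 : ((e2 + e2 : ENNReal)).toReal = ε₂ / 12 + ε₂ / 12 := by
        rw [ENNReal.toReal_add (by finiteness) (by finiteness), he2_def,
          ENNReal.toReal_ofReal (by linarith)]
      rw [h2, h3] at h1
      linarith
    have hlam_ab : lam n * 2⁻¹ * (a n + b n) < ε₂ / 6 := by
      have hpos1 : (0:ℝ) < 1 + a n + b n := by linarith [ha0 n, hb0 n]
      have hfrac : (a n + b n) / (1 + a n + b n) ≤ 1 := by
        rw [div_le_one hpos1]; linarith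
      have hexp : lam n * 2⁻¹ * (a n + b n)
          = 2 * c n * (a n + b n) / ε₁ + ε₂ / 12 * ((a n + b n) / (1 + a n + b n)) := by
        simp only [hlam_def]
        field_simp
        ring
      rw [hexp]
      have h5 : ε₂ / 12 * ((a n + b n) / (1 + a n + b n)) ≤ ε₂ / 12 := by
        have := mul_le_mul_of_nonneg_left hfrac (by positivity : (0:ℝ) ≤ ε₂ / 12)
        simpa using this
      linarith [hE2_n]
    have hdn : (((S19.Phi α w)^[n + n] np') Set.univ).toReal
        + (((S19.Phi α w)^[n + n] nq') Set.univ).toReal < ε₂ / 6 := by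
      rw [← hdeq]; exact hE3_n
    have habn : lam n * 2⁻¹ * (((S19.Psi α w)^[n] Pp) Set.univ).toReal
        + lam n * 2⁻¹ * (((S19.Phi α w)^[n] Pp) Set.univ).toReal
        + lam n * 2⁻¹ * (((S19.Psi α w)^[n] Pq) Set.univ).toReal
        + lam n * 2⁻¹ * (((S19.Phi α w)^[n] Pq) Set.univ).toReal
        = lam n * 2⁻¹ * (a n + b n) := by
      rw [haeq, hbeq]; ring
    linarith [hlam_ab, hdn, htail2, habn]
end
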